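/- arXiv:1908.02434 — 7 statements merged into one kernel-verified Lean document; each statement's English description precedes it below -/
import Mathlib

section
/- Let δ, μe, μv > 0 and c ≥ 0 be real numbers, and set φ := (δ+μe)·μv/δ. (i) If c < φ, then every ψ ∈ ℂ satisfying (μe+δ+ψ)·(ψ+μv) = δ·c has strictly negative real part. (ii) If c > φ, then there exists a real ψ > 0 with (μe+δ+ψ)·(ψ+μv) = δ·c. -/
/-- with `φ := (δ+μe)·μv/δ` and `c ≥ 0`:
(i) if `c < φ`, every complex root `ψ` of `(μe+δ+ψ)(ψ+μv) = δ·c` has `Re ψ < 0`;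
(ii) if `c > φ`, there is a real root `ψ > 0`. -/
theorem characteristic_roots_vector_free (δ μe μv c : ℝ)
    (hδ : 0 < δ) (hμe : 0 < μe) (hμv : 0 < μv) (hc : 0 ≤ c) :
    (c < (δ + μe) * μv / δ →
      ∀ ψ : ℂ, ((μe : ℂ) + (δ : ℂ) + ψ) * (ψ + (μv : ℂ)) = (δ : ℂ) * (c : ℂ) →
        ψ.re < 0) ∧
    ((δ + μe) * μv / δ < c →
      ∃ ψ : ℝ, 0 < ψ ∧ (μe + δ + ψ) * (ψ + μv) = δ * c) := by
  constructor
  · intro hlt ψ hψ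
    by_contra h
    push_neg at h
    have h1 : (μe + δ : ℝ) ≤ ‖(μe : ℂ) + (δ : ℂ) + ψ‖ := by
      calc (μe + δ : ℝ) ≤ ((μe : ℂ) + (δ : ℂ) + ψ).re := by
            simp [Complex.add_re]; linarith
        _ ≤ ‖(μe : ℂ) + (δ : ℂ) + ψ‖ := Complex.re_le_norm _
    have h2 : (μv : ℝ) ≤ ‖ψ + (μv : ℂ)‖ := by
      calc (μv : ℝ) ≤ (ψ + (μv : ℂ)).re := by simp [Complex.add_re]; linarith
        _ ≤ ‖ψ + (μv : ℂ)‖ := Complex.re_le_norm _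
    have habs : ‖(μe : ℂ) + (δ : ℂ) + ψ‖ * ‖ψ + (μv : ℂ)‖
        = δ * c := by
      rw [← norm_mul, hψ, ← Complex.ofReal_mul, Complex.norm_real, Real.norm_eq_abs,
        abs_of_nonneg (by positivity)]
    have hbig : (μe + δ) * μv ≤ δ * c := by
      rw [← habs]
      exact mul_le_mul h1 h2 (le_of_lt hμv) (by positivity)
    have : δ * c < δ * ((δ + μe) * μv / δ) := by
      exact mul_lt_mul_of_pos_left hlt hδ
    rw [mul_div_cancel₀ _ (ne_of_gt hδ)] at this
    nlinarith
  · intro hlt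
    set f : ℝ → ℝ := fun x => (μe + δ + x) * (x + μv) with hf
    have hcont : ContinuousOn f (Set.Icc 0 (δ * c / μv)) := by fun_prop
    have hfa : f 0 < δ * c := by
      have : δ * ((δ + μe) * μv / δ) < δ * c := mul_lt_mul_of_pos_left hlt hδ
      rw [mul_div_cancel₀ _ (ne_of_gt hδ)] at this
      simp only [hf]
      nlinarith
    have hfb : δ * c < f (δ * c / μv) := by
      have hB : 0 < δ * c / μv := by
        have : 0 < δ * c := by nlinarith [mul_pos hδ (lt_of_le_of_lt (by positivity : (0:ℝ) ≤ (δ + μe) * μv / δ) hlt)]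
        positivity
      have hBv : (δ * c / μv) * μv = δ * c := div_mul_cancel₀ _ (ne_of_gt hμv)
      simp only [hf]
      nlinarith
    have := intermediate_value_Ioo (by positivity : (0:ℝ) ≤ δ * c / μv) hcont
    have hmem : δ * c ∈ Set.Ioo (f 0) (f (δ * c / μv)) := ⟨hfa, hfb⟩
    obtain ⟨ψ, hψmem, hψ⟩ := this hmem
    exact ⟨ψ, hψmem.1, hψ⟩
end

section
/- Let μ : [0, ∞) → [0, ∞) be continuous, set F(a) := exp(−∫_0^a μ(s) ds), let Λ ≥ 0, let c : [0, ∞) → [0, ∞) be integrable, and let n0 : [0, ∞) → [0, ∞) be measurable and bounded. Define n(t, a) := Λ·F(a) for 0 ≤ a < t and n(t, a) := n0(a−t)·F(a)/F(a−t) for a ≥ t ≥ 0. Then ∫_0^∞ c(u)·n(t, u) du tends to Λ·∫_0^∞ c(u)·F(u) du as t → ∞. -/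
/-!
Every term of the family `u ↦ c u * n t u` is dominated by `max |Λ| M * |c u|`: the survival
probability `F` lies in `(0, 1]` and is antitone on `[0, ∞)`, so `F a / F (a - t) ≤ 1`.
Moreover `n t u = Λ * F u` as soon as `t > u`, so the claim follows from dominated convergence.
-/

open MeasureTheory Filter Set Topology

theorem tendsto_integral_mul_of_tendsto_of_bounded {α ι : Type*} [MeasurableSpace α]
    {ν : Measure α} {l : Filter ι} [l.IsCountablyGenerated] {g h : α → ℝ} {f : ι → α → ℝ}
    (C : ℝ) (hg : Integrable g ν) (hf_meas : ∀ᶠ i in l, AEStronglyMeasurable (f i) ν)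
    (hf_bdd : ∀ᶠ i in l, ∀ᵐ a ∂ν, |f i a| ≤ C)
    (hf_lim : ∀ᵐ a ∂ν, Tendsto (f · a) l (𝓝 (h a))) :
    Tendsto (fun i => ∫ a, g a * f i a ∂ν) l (𝓝 (∫ a, g a * h a ∂ν)) := by
  refine tendsto_integral_filter_of_dominated_convergence (fun a => |g a| * C)
    (hf_meas.mono fun i hi => hg.aestronglyMeasurable.mul hi)
    (hf_bdd.mono fun i hi => ?_) (hg.abs.mul_const C)
    (hf_lim.mono fun a ha => tendsto_const_nhds.mul ha)
  filter_upwards [hi] with a ha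
  rw [norm_mul, Real.norm_eq_abs, Real.norm_eq_abs]
  exact mul_le_mul_of_nonneg_left ha (abs_nonneg _)

section Survival

variable {μ : ℝ → ℝ}

theorem antitoneOn_exp_neg_integral (hμ_cont : ContinuousOn μ (Ici 0))
    (hμ_nonneg : ∀ a : ℝ, 0 ≤ a → 0 ≤ μ a) :
    AntitoneOn (fun a => Real.exp (-∫ s in (0 : ℝ)..a, μ s)) (Ici 0) := by
  intro a ha b hb hab
  refine Real.exp_le_exp.mpr (neg_le_neg ?_)
  refine intervalIntegral.integral_mono_interval le_rfl ha hab ?_ ?_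
  · filter_upwards [ae_restrict_mem measurableSet_Ioc] with s hs
    exact hμ_nonneg s hs.1.le
  · exact (hμ_cont.mono (by rw [uIcc_of_le (mem_Ici.mp hb)]; exact Icc_subset_Ici_self)).intervalIntegrable

theorem exists_continuous_eqOn_exp_neg_integral (hμ_cont : ContinuousOn μ (Ici 0)) :
    ∃ G : ℝ → ℝ, Continuous G ∧ EqOn G (fun a => Real.exp (-∫ s in (0 : ℝ)..a, μ s)) (Ici 0) := by
  have hμ' : Continuous fun s => μ (max s 0) :=
    hμ_cont.comp_continuous (continuous_id.max continuous_const) fun s => le_max_right s 0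
  refine ⟨fun a => Real.exp (-∫ s in (0 : ℝ)..a, μ (max s 0)),
    Real.continuous_exp.comp (intervalIntegral.continuous_primitive
      (fun _ _ => hμ'.intervalIntegrable _ _) 0).neg, fun a ha => ?_⟩
  refine congrArg (fun x => Real.exp (-x)) (intervalIntegral.integral_congr fun s hs => ?_)
  rw [uIcc_of_le (mem_Ici.mp ha)] at hs
  simp only [max_eq_left hs.1]

end Survival

section Solution

variable {F n0 : ℝ → ℝ} {n : ℝ → ℝ → ℝ} {Λ M : ℝ}

theorem abs_solution_le (hF_pos : ∀ a, 0 < F a) (hF_anti : AntitoneOn F (Ici 0))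
    (hF_zero : F 0 = 1) (hn0_nonneg : ∀ a : ℝ, 0 ≤ a → 0 ≤ n0 a)
    (hn0_bdd : ∀ a : ℝ, 0 ≤ a → n0 a ≤ M)
    (hn_lt : ∀ t a : ℝ, 0 ≤ a → a < t → n t a = Λ * F a)
    (hn_ge : ∀ t a : ℝ, 0 ≤ t → t ≤ a → n t a = n0 (a - t) * F a / F (a - t))
    {t u : ℝ} (ht : 0 ≤ t) (hu : 0 ≤ u) : |n t u| ≤ max |Λ| M := by
  rcases lt_or_ge u t with hut | htu
  · have hFu : F u ≤ 1 := hF_zero ▸ hF_anti self_mem_Ici hu hu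
    rw [hn_lt t u hu hut, abs_mul, abs_of_pos (hF_pos u)]
    exact (mul_le_of_le_one_right (abs_nonneg Λ) hFu).trans (le_max_left _ _)
  · have hut : 0 ≤ u - t := sub_nonneg.mpr htu
    have hratio : F u / F (u - t) ≤ 1 :=
      (div_le_one (hF_pos _)).mpr (hF_anti hut hu (sub_le_self u ht))
    rw [hn_ge t u ht htu, mul_div_assoc, abs_mul, abs_of_nonneg (hn0_nonneg _ hut),
      abs_of_pos (div_pos (hF_pos u) (hF_pos _))]
    exact (mul_le_of_le_one_right (hn0_nonneg _ hut) hratio).trans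
      ((hn0_bdd _ hut).trans (le_max_right _ _))

theorem aestronglyMeasurable_solution {G : ℝ → ℝ} (hG : Continuous G) (hGF : EqOn G F (Ici 0))
    (hn0_meas : Measurable n0)
    (hn_lt : ∀ t a : ℝ, 0 ≤ a → a < t → n t a = Λ * F a)
    (hn_ge : ∀ t a : ℝ, 0 ≤ t → t ≤ a → n t a = n0 (a - t) * F a / F (a - t))
    {t : ℝ} (ht : 0 ≤ t) : AEStronglyMeasurable (n t) (volume.restrict (Ioi 0)) := by
  have hshift : Measurable fun u : ℝ => u - t := measurable_id.sub_const t
  refine (Measurable.aestronglyMeasurable (f := fun u =>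
      if u < t then Λ * G u else n0 (u - t) * G u / G (u - t))
    (Measurable.ite (measurableSet_lt measurable_id measurable_const)
      (hG.measurable.const_mul Λ)
      (((hn0_meas.comp hshift).mul hG.measurable).div (hG.measurable.comp hshift)))).congr ?_
  filter_upwards [ae_restrict_mem measurableSet_Ioi] with u (hu : 0 < u)
  split_ifs with hut
  · rw [hn_lt t u hu.le hut, hGF hu.le]
  · have htu : t ≤ u := not_lt.mp hut
    rw [hn_ge t u ht htu, hGF (ht.trans htu), hGF (sub_nonneg.mpr htu)]

end Solution

theorem contact_integral_tendsto_general
    (μ : ℝ → ℝ) (hμ_cont : ContinuousOn μ (Set.Ici 0))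
    (hμ_nonneg : ∀ a : ℝ, 0 ≤ a → 0 ≤ μ a)
    (F : ℝ → ℝ) (hF : ∀ a, F a = Real.exp (-∫ s in (0 : ℝ)..a, μ s))
    (Λ : ℝ)
    (c : ℝ → ℝ) (hc_int : IntegrableOn c (Set.Ioi 0))
    (n0 : ℝ → ℝ) (hn0_meas : Measurable n0)
    (hn0_nonneg : ∀ a : ℝ, 0 ≤ a → 0 ≤ n0 a)
    (M : ℝ) (hn0_bdd : ∀ a : ℝ, 0 ≤ a → n0 a ≤ M)
    (n : ℝ → ℝ → ℝ)
    (hn_lt : ∀ t a : ℝ, 0 ≤ a → a < t → n t a = Λ * F a)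
    (hn_ge : ∀ t a : ℝ, 0 ≤ t → t ≤ a → n t a = n0 (a - t) * F a / F (a - t)) :
    Filter.Tendsto (fun t => ∫ u in Set.Ioi (0 : ℝ), c u * n t u)
      Filter.atTop (nhds (Λ * ∫ u in Set.Ioi (0 : ℝ), c u * F u)) := by
  have hF_eq : F = fun a => Real.exp (-∫ s in (0 : ℝ)..a, μ s) := funext hF
  have hF_pos : ∀ a, 0 < F a := fun a => hF a ▸ Real.exp_pos _
  have hF_anti : AntitoneOn F (Ici 0) := hF_eq ▸ antitoneOn_exp_neg_integral hμ_cont hμ_nonneg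
  have hF_zero : F 0 = 1 := by simp [hF]
  obtain ⟨G, hG, hGF⟩ := exists_continuous_eqOn_exp_neg_integral hμ_cont
  rw [← hF_eq] at hGF
  simp_rw [← integral_const_mul, mul_left_comm Λ]
  refine tendsto_integral_mul_of_tendsto_of_bounded (max |Λ| M) hc_int ?_ ?_ ?_
  · filter_upwards [eventually_ge_atTop 0] with t ht
    exact aestronglyMeasurable_solution hG hGF hn0_meas hn_lt hn_ge ht
  · filter_upwards [eventually_ge_atTop 0] with t ht
    filter_upwards [ae_restrict_mem measurableSet_Ioi] with u (hu : 0 < u)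
    exact abs_solution_le hF_pos hF_anti hF_zero hn0_nonneg hn0_bdd hn_lt hn_ge ht hu.le
  · filter_upwards [ae_restrict_mem measurableSet_Ioi] with u (hu : 0 < u)
    exact tendsto_const_nhds.congr' <|
      (eventually_gt_atTop u).mono fun t hut => (hn_lt t u hu.le hut).symm

/-- for the explicit solution `n(t,a)` of the age-structured transport
equation, the normalizing integral `∫_0^∞ c(u)·n(t,u) du` tends to
`Λ·∫_0^∞ c(u)·F(u) du` as `t → ∞`. -/
theorem contact_integral_tendsto
    (μ : ℝ → ℝ) (hμ_cont : ContinuousOn μ (Set.Ici 0))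
    (hμ_nonneg : ∀ a : ℝ, 0 ≤ a → 0 ≤ μ a)
    (F : ℝ → ℝ) (hF : ∀ a, F a = Real.exp (-∫ s in (0 : ℝ)..a, μ s))
    (Λ : ℝ) (hΛ : 0 ≤ Λ)
    (c : ℝ → ℝ) (hc_int : IntegrableOn c (Set.Ioi 0))
    (hc_nonneg : ∀ a : ℝ, 0 ≤ a → 0 ≤ c a)
    (n0 : ℝ → ℝ) (hn0_meas : Measurable n0)
    (hn0_nonneg : ∀ a : ℝ, 0 ≤ a → 0 ≤ n0 a)
    (M : ℝ) (hn0_bdd : ∀ a : ℝ, 0 ≤ a → n0 a ≤ M)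
    (n : ℝ → ℝ → ℝ)
    (hn_lt : ∀ t a : ℝ, 0 ≤ a → a < t → n t a = Λ * F a)
    (hn_ge : ∀ t a : ℝ, 0 ≤ t → t ≤ a → n t a = n0 (a - t) * F a / F (a - t)) :
    Filter.Tendsto (fun t => ∫ u in Set.Ioi (0 : ℝ), c u * n t u)
      Filter.atTop (nhds (Λ * ∫ u in Set.Ioi (0 : ℝ), c u * F u)) :=
  contact_integral_tendsto_general μ hμ_cont hμ_nonneg F hF Λ c hc_int n0 hn0_meas hn0_nonneg M
    hn0_bdd n hn_lt hn_ge
end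

section
/- Let βv, μv > 0, let β, γ : [0, ∞) → [0, ∞) be continuous with β integrable on [0, ∞), and let p∞ : [0, ∞) → [0, ∞) be measurable with ∫_0^∞ p∞(a) da = 1. For B > 0 set κ(B) := βv·B/(μv+βv·B), s_B(a) := exp(−κ(B)·∫_0^a β(h) dh), i_B(a) := κ(B)·∫_0^a exp(−∫_τ^a γ(h) dh)·β(τ)·s_B(τ) dτ, and H(B) := ∫_0^∞ p∞(a)·i_B(a) da. Then H(B) < 1 for every B > 0. -/
/-!
Dropping the recovery factor `exp(-∫_τ^a γ) ≤ 1` bounds `i_B(a)` by `κ ∫_0^a β s_B`, and that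
integral is explicit: `-s_B` is a primitive of `κ β s_B`, so it equals `1 - s_B(a)`. Since
`s_B(a) ≥ exp(-κ ∫_0^∞ β) > 0`, every `i_B(a)` lies in `[0, 1 - exp(-κ ∫_0^∞ β)]`, and averaging
against the probability density `p∞` keeps `H(B)` in that interval.
-/

open MeasureTheory

/-- Effective transmission factor `κ(B) = βv·B/(μv+βv·B)`. -/
noncomputable def kappaFn (βv μv B : ℝ) : ℝ := βv * B / (μv + βv * B)

/-- Steady-state susceptible age profile `s_B`. -/
noncomputable def sProf (βv μv : ℝ) (β : ℝ → ℝ) (B a : ℝ) : ℝ :=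
  Real.exp (-(kappaFn βv μv B * ∫ h in (0 : ℝ)..a, β h))

/-- Steady-state infected age profile `i_B`. -/
noncomputable def iProf (βv μv : ℝ) (β γ : ℝ → ℝ) (B a : ℝ) : ℝ :=
  kappaFn βv μv B * ∫ τ in (0 : ℝ)..a,
    Real.exp (-∫ h in τ..a, γ h) * β τ * sProf βv μv β B τ

/-- Force-of-infection map `H(B) = ∫_0^∞ p∞(a)·i_B(a) da`. -/
noncomputable def Hmap (βv μv : ℝ) (β γ pinf : ℝ → ℝ) (B : ℝ) : ℝ :=
  ∫ a in Set.Ioi (0 : ℝ), pinf a * iProf βv μv β γ B a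

/-- Basic reproductive number `R0`. -/
noncomputable def R0 (βv μv : ℝ) (β γ pinf : ℝ → ℝ) : ℝ :=
  (βv / μv) * ∫ a in Set.Ioi (0 : ℝ),
    pinf a * ∫ τ in (0 : ℝ)..a, β τ * Real.exp (-∫ h in τ..a, γ h)

open Real Set

lemma kappaFn_nonneg {βv μv B : ℝ} (hβv : 0 ≤ βv) (hμv : 0 ≤ μv) (hB : 0 ≤ B) :
    0 ≤ kappaFn βv μv B :=
  div_nonneg (mul_nonneg hβv hB) (add_nonneg hμv (mul_nonneg hβv hB))

lemma continuousOn_primitive_Icc {β : ℝ → ℝ} {a b : ℝ} (hab : a ≤ b)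
    (hβ : ContinuousOn β (Icc a b)) : ContinuousOn (fun τ => ∫ h in a..τ, β h) (Icc a b) := by
  have h := intervalIntegral.continuousOn_primitive_interval (a := a) (b := b) (μ := volume)
    (f := β) (by rw [uIcc_of_le hab]; exact hβ.integrableOn_Icc)
  rwa [uIcc_of_le hab] at h

theorem integral_mul_exp_neg_mul_primitive (κ : ℝ) {β : ℝ → ℝ} {a b : ℝ} (hab : a ≤ b)
    (hβ : ContinuousOn β (Icc a b)) :
    ∫ τ in a..b, κ * β τ * exp (-(κ * ∫ h in a..τ, β h))
      = 1 - exp (-(κ * ∫ h in a..b, β h)) := by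
  set G : ℝ → ℝ := fun τ => ∫ h in a..τ, β h
  have hG_cont : ContinuousOn G (Icc a b) := continuousOn_primitive_Icc hab hβ
  have hG_deriv : ∀ x ∈ Ioo a b, HasDerivAt G (β x) x := fun x hx =>
    intervalIntegral.integral_hasDerivAt_right
      ((hβ.mono (Icc_subset_Icc_right hx.2.le)).intervalIntegrable_of_Icc hx.1.le)
      ((hβ.mono Ioo_subset_Icc_self).stronglyMeasurableAtFilter isOpen_Ioo x hx)
      (hβ.continuousAt (Icc_mem_nhds hx.1 hx.2))
  have hF_deriv : ∀ x ∈ Ioo a b, HasDerivWithinAt (fun τ => -exp (-(κ * G τ)))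
      (κ * β x * exp (-(κ * G x))) (Ioi x) x := by
    intro x hx
    have h : HasDerivAt (fun τ => -exp (-(κ * G τ))) (-(exp (-(κ * G x)) * -(κ * β x))) x :=
      ((hG_deriv x hx).const_mul κ).neg.exp.neg
    exact (h.congr_deriv (by ring)).hasDerivWithinAt
  have hF_cont : ContinuousOn (fun τ => -exp (-(κ * G τ))) (Icc a b) :=
    (continuous_exp.comp_continuousOn (hG_cont.const_smul κ).neg).neg
  have hF'_int : IntervalIntegrable (fun τ => κ * β τ * exp (-(κ * G τ))) volume a b :=
    ((continuousOn_const.mul hβ).mul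
      (continuous_exp.comp_continuousOn (hG_cont.const_smul κ).neg)).intervalIntegrable_of_Icc hab
  rw [intervalIntegral.integral_eq_sub_of_hasDeriv_right_of_le hab hF_cont hF_deriv hF'_int]
  simp only [G, intervalIntegral.integral_same, mul_zero, neg_zero, exp_zero]
  ring

lemma setIntegral_mul_le_of_integral_eq_one {α : Type*} [MeasurableSpace α] {μ : Measure α}
    {s : Set α} {p f : α → ℝ} {C : ℝ} (hp : ∫ x in s, p x ∂μ = 1) (hp0 : ∀ x ∈ s, 0 ≤ p x)
    (hf0 : ∀ x ∈ s, 0 ≤ f x) (hfC : ∀ x ∈ s, f x ≤ C) :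
    ∫ x in s, p x * f x ∂μ ≤ C := by
  have hp_int : IntegrableOn p s μ := by
    by_contra h
    rw [integral_undef h] at hp
    exact zero_ne_one hp
  calc ∫ x in s, p x * f x ∂μ
      ≤ ∫ x in s, p x * C ∂μ :=
        setIntegral_mono_of_nonneg (fun x hx => mul_nonneg (hp0 x hx) (hf0 x hx))
          (fun x hx => mul_le_mul_of_nonneg_left (hfC x hx) (hp0 x hx)) (hp_int.mul_const C)
    _ = C := by rw [integral_mul_const, hp, one_mul]

section Profiles

variable {βv μv B : ℝ} {β γ : ℝ → ℝ} {a : ℝ}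

lemma iProf_nonneg (hκ : 0 ≤ kappaFn βv μv B) (hβ0 : ∀ τ, 0 ≤ τ → 0 ≤ β τ) (ha : 0 ≤ a) :
    0 ≤ iProf βv μv β γ B a :=
  mul_nonneg hκ <| intervalIntegral.integral_nonneg ha fun τ hτ =>
    mul_nonneg (mul_nonneg (exp_pos _).le (hβ0 τ hτ.1)) (exp_pos _).le

lemma iProf_le_one_sub_sProf (hκ : 0 ≤ kappaFn βv μv B) (hβ : ContinuousOn β (Ici 0))
    (hβ0 : ∀ τ, 0 ≤ τ → 0 ≤ β τ) (hγ0 : ∀ τ, 0 ≤ τ → 0 ≤ γ τ) (ha : 0 ≤ a) :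
    iProf βv μv β γ B a ≤ 1 - sProf βv μv β B a := by
  have hβa : ContinuousOn β (Icc 0 a) := hβ.mono Icc_subset_Ici_self
  have hdrop : ∀ τ ∈ Ioc 0 a, exp (-∫ h in τ..a, γ h) * β τ * sProf βv μv β B τ
      ≤ β τ * sProf βv μv β B τ := by
    intro τ hτ
    have hγτ : 0 ≤ ∫ h in τ..a, γ h :=
      intervalIntegral.integral_nonneg hτ.2 fun h hh => hγ0 h (hτ.1.le.trans hh.1)
    rw [mul_assoc]
    exact mul_le_of_le_one_left (mul_nonneg (hβ0 τ hτ.1.le) (exp_pos _).le)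
      (exp_le_one_iff.mpr (neg_nonpos.mpr hγτ))
  have hβs_int : IntegrableOn (fun τ => β τ * sProf βv μv β B τ) (Ioc 0 a) := by
    refine (ContinuousOn.integrableOn_Icc ?_).mono_set Ioc_subset_Icc_self
    exact hβa.mul (continuous_exp.comp_continuousOn
      ((continuousOn_primitive_Icc ha hβa).const_smul (kappaFn βv μv B)).neg)
  calc iProf βv μv β γ B a
      ≤ kappaFn βv μv B * ∫ τ in (0 : ℝ)..a, β τ * sProf βv μv β B τ := by
        refine mul_le_mul_of_nonneg_left ?_ hκ
        simp only [intervalIntegral.integral_of_le ha]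
        exact setIntegral_mono_of_nonneg (fun τ hτ => mul_nonneg (mul_nonneg (exp_pos _).le
          (hβ0 τ hτ.1.le)) (exp_pos _).le) hdrop hβs_int
    _ = 1 - sProf βv μv β B a := by
        rw [← intervalIntegral.integral_const_mul]
        simp only [sProf, ← mul_assoc]
        exact integral_mul_exp_neg_mul_primitive _ ha hβa

lemma exp_neg_mul_integral_le_sProf (hκ : 0 ≤ kappaFn βv μv B) (hβ0 : ∀ τ, 0 ≤ τ → 0 ≤ β τ)
    (hβ_int : IntegrableOn β (Ioi 0)) (ha : 0 ≤ a) :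
    exp (-(kappaFn βv μv B * ∫ h in Ioi 0, β h)) ≤ sProf βv μv β B a := by
  refine exp_le_exp.mpr (neg_le_neg (mul_le_mul_of_nonneg_left ?_ hκ))
  rw [intervalIntegral.integral_of_le ha]
  exact setIntegral_mono_set hβ_int
    ((ae_restrict_iff' measurableSet_Ioi).mpr (ae_of_all _ fun h hh => hβ0 h hh.le))
    Ioc_subset_Ioi_self.eventuallyLE

end Profiles

theorem H_lt_one_general
    (βv μv : ℝ) (hβv : 0 < βv) (hμv : 0 < μv)
    (β γ : ℝ → ℝ) (hβ_cont : ContinuousOn β (Set.Ici 0))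
    (hβ_nonneg : ∀ a : ℝ, 0 ≤ a → 0 ≤ β a) (hγ_nonneg : ∀ a : ℝ, 0 ≤ a → 0 ≤ γ a)
    (hβ_int : MeasureTheory.IntegrableOn β (Set.Ioi 0))
    (pinf : ℝ → ℝ) (hp_nonneg : ∀ a : ℝ, 0 ≤ a → 0 ≤ pinf a)
    (hp_int : ∫ a in Set.Ioi (0 : ℝ), pinf a = 1)
    : ∀ B : ℝ, 0 < B → Hmap βv μv β γ pinf B < 1 := by
  intro B hB
  have hκ := kappaFn_nonneg hβv.le hμv.le hB.le
  have hi_le : ∀ a ∈ Ioi (0 : ℝ), iProf βv μv β γ B a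
      ≤ 1 - exp (-(kappaFn βv μv B * ∫ h in Ioi 0, β h)) := fun a ha =>
    (iProf_le_one_sub_sProf hκ hβ_cont hβ_nonneg hγ_nonneg ha.le).trans
      (sub_le_sub_left (exp_neg_mul_integral_le_sProf hκ hβ_nonneg hβ_int ha.le) 1)
  calc Hmap βv μv β γ pinf B
      ≤ 1 - exp (-(kappaFn βv μv B * ∫ h in Ioi 0, β h)) :=
        setIntegral_mul_le_of_integral_eq_one hp_int (fun a ha => hp_nonneg a ha.le)
          (fun a ha => iProf_nonneg hκ hβ_nonneg ha.le) hi_le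
    _ < 1 := sub_lt_self 1 (exp_pos _)

/-- the force-of-infection map satisfies `H(B) < 1` for every `B > 0`. -/
theorem H_lt_one
    (βv μv : ℝ) (hβv : 0 < βv) (hμv : 0 < μv)
    (β γ : ℝ → ℝ) (hβ_cont : ContinuousOn β (Set.Ici 0)) (hγ_cont : ContinuousOn γ (Set.Ici 0))
    (hβ_nonneg : ∀ a : ℝ, 0 ≤ a → 0 ≤ β a) (hγ_nonneg : ∀ a : ℝ, 0 ≤ a → 0 ≤ γ a)
    (hβ_int : MeasureTheory.IntegrableOn β (Set.Ioi 0))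
    (pinf : ℝ → ℝ) (hp_meas : Measurable pinf) (hp_nonneg : ∀ a : ℝ, 0 ≤ a → 0 ≤ pinf a)
    (hp_int : ∫ a in Set.Ioi (0 : ℝ), pinf a = 1)
    : ∀ B : ℝ, 0 < B → Hmap βv μv β γ pinf B < 1 :=
  H_lt_one_general βv μv hβv hμv β γ hβ_cont hβ_nonneg hγ_nonneg hβ_int pinf hp_nonneg hp_int
end

section
/- Let βv, μv > 0, let β, γ : [0, ∞) → [0, ∞) be continuous with β integrable on [0, ∞), and let p∞ : [0, ∞) → [0, ∞) be measurable with ∫_0^∞ p∞(a) da = 1. For B > 0 define κ(B) := βv·B/(μv+βv·B), s_B(a) := exp(−κ(B)·∫_0^a β(h) dh), i_B(a) := κ(B)·∫_0^a exp(−∫_τ^a γ(h) dh)·β(τ)·s_B(τ) dτ, and H(B) := ∫_0^∞ p∞(a)·i_B(a) da. Then H(B)/B tends to R0 := (βv/μv)·∫_0^∞ p∞(a)·(∫_0^a β(τ)·exp(−∫_τ^a γ(h) dh) dτ) da as B → 0 from the right. -/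
open MeasureTheory

/- ### Auxiliary material -/

/-- A primitive of a function continuous on `[0,∞)` is continuous on `[0,∞)`. -/
lemma auxPrimCont {g : ℝ → ℝ} (hg : ContinuousOn g (Set.Ici 0)) :
    ContinuousOn (fun a => ∫ t in (0:ℝ)..a, g t) (Set.Ici 0) := by
  intro x hx
  have hx' : (0:ℝ) ≤ x := hx
  have hint : IntegrableOn g (Set.Icc 0 (x+1)) :=
    (hg.mono Set.Icc_subset_Ici_self).integrableOn_compact isCompact_Icc
  have h1 : ContinuousOn (fun a => ∫ t in (0:ℝ)..a, g t) (Set.Icc 0 (x+1)) := by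
    have := intervalIntegral.continuousOn_primitive_interval
      (f := g) (a := (0:ℝ)) (b := x+1) (μ := volume)
      (by rwa [Set.uIcc_of_le (by linarith : (0:ℝ) ≤ x+1)])
    rwa [Set.uIcc_of_le (by linarith : (0:ℝ) ≤ x+1)] at this
  have hmem : Set.Icc (0:ℝ) (x+1) ∈ nhdsWithin x (Set.Ici 0) := by
    refine Filter.mem_of_superset
      (inter_mem_nhdsWithin (Set.Ici 0) (Iio_mem_nhds (by linarith : x < x+1))) ?_
    rintro y ⟨h0, h1⟩
    exact ⟨h0, le_of_lt h1⟩
  exact (h1 x ⟨hx', by linarith⟩).mono_of_mem_nhdsWithin hmem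

lemma auxII {g : ℝ → ℝ} (hg : ContinuousOn g (Set.Ici 0)) {a b : ℝ}
    (ha : 0 ≤ a) (hb : 0 ≤ b) : IntervalIntegrable g volume a b :=
  (hg.mono (fun _ hx => le_trans (le_min ha hb) hx.1)).intervalIntegrable

/-- The auxiliary infected profile where the force of infection enters only through
`c = κ(B)`. -/
noncomputable def Ifun (β γ : ℝ → ℝ) (c a : ℝ) : ℝ :=
  ∫ τ in (0:ℝ)..a, Real.exp (-∫ h in τ..a, γ h) * β τ *
    Real.exp (-(c * ∫ h in (0:ℝ)..τ, β h))

noncomputable def Ffun (β γ pinf : ℝ → ℝ) (c : ℝ) : ℝ :=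
  ∫ a in Set.Ioi (0:ℝ), pinf a * Ifun β γ c a

/-- `H(B)/B → R0` as `B → 0⁺`. -/
theorem H_div_tendsto_R0
    (βv μv : ℝ) (hβv : 0 < βv) (hμv : 0 < μv)
    (β γ : ℝ → ℝ) (hβ_cont : ContinuousOn β (Set.Ici 0)) (hγ_cont : ContinuousOn γ (Set.Ici 0))
    (hβ_nonneg : ∀ a : ℝ, 0 ≤ a → 0 ≤ β a) (hγ_nonneg : ∀ a : ℝ, 0 ≤ a → 0 ≤ γ a)
    (hβ_int : MeasureTheory.IntegrableOn β (Set.Ioi 0))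
    (pinf : ℝ → ℝ) (hp_meas : Measurable pinf) (hp_nonneg : ∀ a : ℝ, 0 ≤ a → 0 ≤ pinf a)
    (hp_int : ∫ a in Set.Ioi (0 : ℝ), pinf a = 1)
    : Filter.Tendsto (fun B => Hmap βv μv β γ pinf B / B) (nhdsWithin 0 (Set.Ioi 0)) (nhds (R0 βv μv β γ pinf)) := by
  set M : ℝ := ∫ a in Set.Ioi (0:ℝ), β a with hMdef
  have hM0 : 0 ≤ M :=
    setIntegral_nonneg measurableSet_Ioi (fun a ha => hβ_nonneg a (le_of_lt ha))
  -- bounds on the primitive of β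
  have hP_nn : ∀ τ : ℝ, 0 ≤ τ → 0 ≤ ∫ t in (0:ℝ)..τ, β t := by
    intro τ hτ
    apply intervalIntegral.integral_nonneg hτ
    intro u hu
    exact hβ_nonneg u hu.1
  have hP_le : ∀ τ : ℝ, 0 ≤ τ → (∫ t in (0:ℝ)..τ, β t) ≤ M := by
    intro τ hτ
    rw [intervalIntegral.integral_of_le hτ]
    apply setIntegral_mono_set hβ_int
    · filter_upwards [self_mem_ae_restrict measurableSet_Ioi] with x hx
      exact hβ_nonneg x (le_of_lt hx)
    · exact Filter.Eventually.of_forall (fun x hx => hx.1)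
  -- continuity of the inner integrand on [0,a]
  have hcontInt : ∀ c a : ℝ, 0 ≤ a → ContinuousOn
      (fun τ => Real.exp (-∫ h in τ..a, γ h) * β τ *
        Real.exp (-(c * ∫ h in (0:ℝ)..τ, β h))) (Set.Icc 0 a) := by
    intro c a ha
    have hΓ : ContinuousOn (fun τ => ∫ h in (0:ℝ)..τ, γ h) (Set.Ici 0) := auxPrimCont hγ_cont
    have hP : ContinuousOn (fun τ => ∫ h in (0:ℝ)..τ, β h) (Set.Ici 0) := auxPrimCont hβ_cont
    have hsub : Set.Icc (0:ℝ) a ⊆ Set.Ici 0 := Set.Icc_subset_Ici_self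
    have h1 : ContinuousOn
        (fun τ => Real.exp (-((∫ h in (0:ℝ)..a, γ h) - ∫ h in (0:ℝ)..τ, γ h)) * β τ *
          Real.exp (-(c * ∫ h in (0:ℝ)..τ, β h))) (Set.Icc 0 a) := by
      apply ContinuousOn.mul
      apply ContinuousOn.mul
      · exact Real.continuous_exp.comp_continuousOn
          ((continuousOn_const.sub (hΓ.mono hsub)).neg)
      · exact hβ_cont.mono hsub
      · exact Real.continuous_exp.comp_continuousOn (((hP.mono hsub).const_smul c).neg)
    apply h1.congr
    intro τ hτ
    have h2 : (∫ h in (0:ℝ)..a, γ h) - ∫ h in (0:ℝ)..τ, γ h = ∫ h in τ..a, γ h :=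
      intervalIntegral.integral_interval_sub_left (auxII hγ_cont le_rfl ha)
        (auxII hγ_cont le_rfl hτ.1)
    dsimp only
    rw [← h2]
  have hII : ∀ c a : ℝ, 0 ≤ a → IntervalIntegrable
      (fun τ => Real.exp (-∫ h in τ..a, γ h) * β τ *
        Real.exp (-(c * ∫ h in (0:ℝ)..τ, β h))) volume 0 a := by
    intro c a ha
    apply ContinuousOn.intervalIntegrable
    rw [Set.uIcc_of_le ha]
    exact hcontInt c a ha
  have hexp1 : ∀ a τ : ℝ, 0 ≤ τ → τ ≤ a → Real.exp (-∫ h in τ..a, γ h) ≤ 1 := by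
    intro a τ hτ hτa
    rw [Real.exp_le_one_iff, neg_nonpos]
    apply intervalIntegral.integral_nonneg hτa
    intro u hu
    exact hγ_nonneg u (le_trans hτ hu.1)
  have hIfun_nonneg : ∀ c a : ℝ, 0 ≤ a → 0 ≤ Ifun β γ c a := by
    intro c a ha
    apply intervalIntegral.integral_nonneg ha
    intro τ hτ
    have := hβ_nonneg τ hτ.1
    positivity
  have hIfun_le : ∀ c a : ℝ, 0 ≤ c → 0 ≤ a → Ifun β γ c a ≤ M := by
    intro c a hc ha
    have h1 : Ifun β γ c a ≤ ∫ τ in (0:ℝ)..a, β τ := by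
      apply intervalIntegral.integral_mono_on ha (hII c a ha) (auxII hβ_cont le_rfl ha)
      intro τ hτ
      have he1 : Real.exp (-∫ h in τ..a, γ h) ≤ 1 := hexp1 a τ hτ.1 hτ.2
      have he3 : Real.exp (-(c * ∫ h in (0:ℝ)..τ, β h)) ≤ 1 := by
        rw [Real.exp_le_one_iff, neg_nonpos]
        exact mul_nonneg hc (hP_nn τ hτ.1)
      have hb := hβ_nonneg τ hτ.1
      have hp1 := Real.exp_pos (-∫ h in τ..a, γ h)
      have hp3 := Real.exp_pos (-(c * ∫ h in (0:ℝ)..τ, β h))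
      nlinarith [mul_le_mul_of_nonneg_left he3 (mul_nonneg hp1.le hb),
        mul_le_mul_of_nonneg_right he1 hb]
    exact le_trans h1 (hP_le a ha)
  have hIfun_mono : ∀ c a : ℝ, 0 ≤ c → 0 ≤ a → Ifun β γ c a ≤ Ifun β γ 0 a := by
    intro c a hc ha
    apply intervalIntegral.integral_mono_on ha (hII c a ha) (hII 0 a ha)
    intro τ hτ
    have hb := hβ_nonneg τ hτ.1
    have hp1 := (Real.exp_pos (-∫ h in τ..a, γ h)).le
    have he3 : Real.exp (-(c * ∫ h in (0:ℝ)..τ, β h)) ≤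
        Real.exp (-((0:ℝ) * ∫ h in (0:ℝ)..τ, β h)) := by
      apply Real.exp_le_exp.mpr
      simp only [zero_mul, neg_zero, neg_nonpos]
      exact mul_nonneg hc (hP_nn τ hτ.1)
    exact mul_le_mul_of_nonneg_left he3 (mul_nonneg hp1 hb)
  have hexpM : ∀ c : ℝ, 0 ≤ c → Real.exp (-(c * M)) ≤ 1 := by
    intro c hc
    rw [Real.exp_le_one_iff, neg_nonpos]
    exact mul_nonneg hc hM0
  have hIfun_sub : ∀ c a : ℝ, 0 ≤ c → 0 ≤ a →
      Ifun β γ 0 a - Ifun β γ c a ≤ (1 - Real.exp (-(c * M))) * M := by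
    intro c a hc ha
    have h1 : Ifun β γ 0 a - Ifun β γ c a = ∫ τ in (0:ℝ)..a,
        (Real.exp (-∫ h in τ..a, γ h) * β τ *
          Real.exp (-((0:ℝ) * ∫ h in (0:ℝ)..τ, β h)) -
         Real.exp (-∫ h in τ..a, γ h) * β τ *
          Real.exp (-(c * ∫ h in (0:ℝ)..τ, β h))) :=
      (intervalIntegral.integral_sub (hII 0 a ha) (hII c a ha)).symm
    rw [h1]
    have h2 : (∫ τ in (0:ℝ)..a,
        (Real.exp (-∫ h in τ..a, γ h) * β τ *
          Real.exp (-((0:ℝ) * ∫ h in (0:ℝ)..τ, β h)) -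
         Real.exp (-∫ h in τ..a, γ h) * β τ *
          Real.exp (-(c * ∫ h in (0:ℝ)..τ, β h)))) ≤
        ∫ τ in (0:ℝ)..a, (1 - Real.exp (-(c * M))) * β τ := by
      apply intervalIntegral.integral_mono_on ha
        ((hII 0 a ha).sub (hII c a ha))
        ((auxII hβ_cont le_rfl ha).const_mul _)
      intro τ hτ
      have hb := hβ_nonneg τ hτ.1
      have he1 : Real.exp (-∫ h in τ..a, γ h) ≤ 1 := hexp1 a τ hτ.1 hτ.2
      have hp1 := (Real.exp_pos (-∫ h in τ..a, γ h)).le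
      have he3 : Real.exp (-(c * M)) ≤ Real.exp (-(c * ∫ h in (0:ℝ)..τ, β h)) := by
        apply Real.exp_le_exp.mpr
        rw [neg_le_neg_iff]
        exact mul_le_mul_of_nonneg_left (hP_le τ hτ.1) hc
      have he4 : Real.exp (-(c * ∫ h in (0:ℝ)..τ, β h)) ≤ 1 := by
        rw [Real.exp_le_one_iff, neg_nonpos]
        exact mul_nonneg hc (hP_nn τ hτ.1)
      simp only [zero_mul, neg_zero, Real.exp_zero, mul_one]
      nlinarith [mul_le_mul_of_nonneg_right he1 (mul_nonneg hb
          (sub_nonneg.mpr he4)),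
        mul_le_mul_of_nonneg_left he3 hb]
    refine le_trans h2 ?_
    rw [intervalIntegral.integral_const_mul]
    have := hexpM c hc
    have h3 : (∫ τ in (0:ℝ)..a, β τ) ≤ M := hP_le a ha
    nlinarith [hP_nn a ha]
  -- continuity of `Ifun c` on `[0,∞)`
  have hIfun_cont : ∀ c : ℝ, ContinuousOn (Ifun β γ c) (Set.Ici 0) := by
    intro c
    have hΓ : ContinuousOn (fun τ => ∫ h in (0:ℝ)..τ, γ h) (Set.Ici 0) := auxPrimCont hγ_cont
    have hP : ContinuousOn (fun τ => ∫ h in (0:ℝ)..τ, β h) (Set.Ici 0) := auxPrimCont hβ_cont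
    have hg : ContinuousOn (fun τ => Real.exp (∫ h in (0:ℝ)..τ, γ h) * β τ *
        Real.exp (-(c * ∫ h in (0:ℝ)..τ, β h))) (Set.Ici 0) := by
      exact ((Real.continuous_exp.comp_continuousOn hΓ).mul hβ_cont).mul
        (Real.continuous_exp.comp_continuousOn ((hP.const_smul c).neg))
    have hJ : ContinuousOn (fun a => ∫ τ in (0:ℝ)..a,
        Real.exp (∫ h in (0:ℝ)..τ, γ h) * β τ *
          Real.exp (-(c * ∫ h in (0:ℝ)..τ, β h))) (Set.Ici 0) := auxPrimCont hg
    have hE : ContinuousOn (fun a => Real.exp (-(∫ h in (0:ℝ)..a, γ h)) *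
        ∫ τ in (0:ℝ)..a, Real.exp (∫ h in (0:ℝ)..τ, γ h) * β τ *
          Real.exp (-(c * ∫ h in (0:ℝ)..τ, β h))) (Set.Ici 0) :=
      (Real.continuous_exp.comp_continuousOn hΓ.neg).mul hJ
    apply hE.congr
    intro a ha
    have ha' : (0:ℝ) ≤ a := ha
    unfold Ifun
    dsimp only
    rw [← intervalIntegral.integral_const_mul]
    apply intervalIntegral.integral_congr
    intro τ hτ
    rw [Set.uIcc_of_le ha'] at hτ
    have h2 : (∫ h in (0:ℝ)..a, γ h) - ∫ h in (0:ℝ)..τ, γ h = ∫ h in τ..a, γ h :=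
      intervalIntegral.integral_interval_sub_left (auxII hγ_cont le_rfl ha')
        (auxII hγ_cont le_rfl hτ.1)
    dsimp only
    rw [← h2]
    simp only [neg_sub, Real.exp_sub, Real.exp_neg]
    ring
  -- integrability of pinf and of pinf * Ifun
  have hpinf_int : IntegrableOn pinf (Set.Ioi 0) := by
    by_contra h
    rw [integral_undef h] at hp_int
    norm_num at hp_int
  have hpI_meas : ∀ c : ℝ, AEStronglyMeasurable (fun a => pinf a * Ifun β γ c a)
      (volume.restrict (Set.Ioi 0)) := by
    intro c
    apply AEStronglyMeasurable.mul (hp_meas.aestronglyMeasurable)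
    have h1 : AEMeasurable (Ifun β γ c) (volume.restrict (Set.Ici 0)) :=
      (hIfun_cont c).aemeasurable measurableSet_Ici
    exact (h1.mono_measure (Measure.restrict_mono Set.Ioi_subset_Ici_self le_rfl)).aestronglyMeasurable
  have hpI_int : ∀ c : ℝ, 0 ≤ c →
      IntegrableOn (fun a => pinf a * Ifun β γ c a) (Set.Ioi 0) := by
    intro c hc
    apply Integrable.mono' (hpinf_int.const_mul M) (hpI_meas c)
    filter_upwards [self_mem_ae_restrict measurableSet_Ioi] with a ha
    have ha' : (0:ℝ) ≤ a := le_of_lt ha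
    rw [Real.norm_eq_abs, abs_of_nonneg (mul_nonneg (hp_nonneg a ha') (hIfun_nonneg c a ha'))]
    calc pinf a * Ifun β γ c a ≤ pinf a * M :=
          mul_le_mul_of_nonneg_left (hIfun_le c a hc ha') (hp_nonneg a ha')
      _ = M * pinf a := mul_comm _ _
  -- bound on F
  have hF_bound : ∀ c : ℝ, 0 ≤ c →
      |Ffun β γ pinf 0 - Ffun β γ pinf c| ≤ (1 - Real.exp (-(c * M))) * M := by
    intro c hc
    have hsub : Ffun β γ pinf 0 - Ffun β γ pinf c =
        ∫ a in Set.Ioi (0:ℝ), (pinf a * Ifun β γ 0 a - pinf a * Ifun β γ c a) :=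
      (integral_sub (hpI_int 0 le_rfl) (hpI_int c hc)).symm
    have hnn : 0 ≤ Ffun β γ pinf 0 - Ffun β γ pinf c := by
      rw [hsub]
      apply setIntegral_nonneg measurableSet_Ioi
      intro a ha
      have ha' : (0:ℝ) ≤ a := le_of_lt ha
      have := hIfun_mono c a hc ha'
      have := hp_nonneg a ha'
      nlinarith
    rw [abs_of_nonneg hnn, hsub]
    have hle : (∫ a in Set.Ioi (0:ℝ), (pinf a * Ifun β γ 0 a - pinf a * Ifun β γ c a)) ≤
        ∫ a in Set.Ioi (0:ℝ), pinf a * ((1 - Real.exp (-(c * M))) * M) := by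
      apply setIntegral_mono_on ((hpI_int 0 le_rfl).sub (hpI_int c hc))
        (hpinf_int.mul_const _) measurableSet_Ioi
      intro a ha
      have ha' : (0:ℝ) ≤ a := le_of_lt ha
      have h1 := hIfun_sub c a hc ha'
      have h2 := hp_nonneg a ha'
      simp only [Pi.sub_apply]
      nlinarith [mul_le_mul_of_nonneg_left h1 h2]
    refine le_trans hle ?_
    rw [integral_mul_const, hp_int, one_mul]
  -- κ is nonnegative on Ioi 0 and tends to 0
  have hκ_nonneg : ∀ B : ℝ, 0 < B → 0 ≤ kappaFn βv μv B := by
    intro B hB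
    unfold kappaFn
    positivity
  have hκ_tendsto : Filter.Tendsto (kappaFn βv μv) (nhdsWithin 0 (Set.Ioi 0)) (nhds 0) := by
    have h1 : ContinuousAt (fun B : ℝ => βv * B / (μv + βv * B)) 0 := by
      apply ContinuousAt.div (by fun_prop) (by fun_prop)
      simp [hμv.ne']
    have h2 : Filter.Tendsto (fun B : ℝ => βv * B / (μv + βv * B))
        (nhdsWithin 0 (Set.Ioi 0)) (nhds (βv * 0 / (μv + βv * 0))) :=
      h1.tendsto.mono_left nhdsWithin_le_nhds
    simp only [mul_zero, zero_div] at h2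
    exact h2
  -- identification of Hmap B / B for B > 0
  have hEq : ∀ B : ℝ, B ∈ Set.Ioi (0:ℝ) →
      Hmap βv μv β γ pinf B / B =
        βv / (μv + βv * B) * Ffun β γ pinf (kappaFn βv μv B) := by
    intro B hB
    have hB' : (0:ℝ) < B := hB
    have hden : (0:ℝ) < μv + βv * B := by positivity
    have hH : Hmap βv μv β γ pinf B =
        kappaFn βv μv B * Ffun β γ pinf (kappaFn βv μv B) := by
      unfold Hmap Ffun iProf sProf Ifun
      rw [← integral_const_mul]
      apply integral_congr_ae
      filter_upwards with a
      ring
    rw [hH]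
    unfold kappaFn
    field_simp
  -- F(κ B) → F(0)
  have hF_tendsto : Filter.Tendsto (fun B => Ffun β γ pinf (kappaFn βv μv B))
      (nhdsWithin 0 (Set.Ioi 0)) (nhds (Ffun β γ pinf 0)) := by
    rw [← tendsto_sub_nhds_zero_iff]
    have hδ : Filter.Tendsto (fun B => (1 - Real.exp (-(kappaFn βv μv B * M))) * M)
        (nhdsWithin 0 (Set.Ioi 0)) (nhds 0) := by
      have h1 : Filter.Tendsto (fun B => -(kappaFn βv μv B * M))
          (nhdsWithin 0 (Set.Ioi 0)) (nhds (-(0 * M))) := (hκ_tendsto.mul_const M).neg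
      have h2 := (Real.continuous_exp.tendsto _).comp h1
      simp only [zero_mul, neg_zero, Real.exp_zero] at h2
      have h3 := ((tendsto_const_nhds (x := (1:ℝ))).sub h2).mul_const M
      simpa using h3
    apply squeeze_zero_norm' _ hδ
    filter_upwards [self_mem_nhdsWithin] with B hB
    have hc := hκ_nonneg B hB
    have := hF_bound (kappaFn βv μv B) hc
    rw [Real.norm_eq_abs, abs_sub_comm]
    exact this
  -- identification of R0
  have hR0 : R0 βv μv β γ pinf = βv / μv * Ffun β γ pinf 0 := by
    unfold R0 Ffun Ifun
    congr 1
    apply integral_congr_ae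
    filter_upwards with a
    congr 1
    apply intervalIntegral.integral_congr
    intro τ _
    simp [Real.exp_zero]
    ring
  -- assemble
  have hc_tendsto : Filter.Tendsto (fun B : ℝ => βv / (μv + βv * B))
      (nhdsWithin 0 (Set.Ioi 0)) (nhds (βv / μv)) := by
    have h1 : ContinuousAt (fun B : ℝ => βv / (μv + βv * B)) 0 := by
      apply ContinuousAt.div (by fun_prop) (by fun_prop)
      simp [hμv.ne']
    have h2 : Filter.Tendsto (fun B : ℝ => βv / (μv + βv * B))
        (nhdsWithin 0 (Set.Ioi 0)) (nhds (βv / (μv + βv * 0))) :=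
      h1.tendsto.mono_left nhdsWithin_le_nhds
    simpa using h2
  have hmain := hc_tendsto.mul hF_tendsto
  rw [hR0]
  apply hmain.congr'
  filter_upwards [self_mem_nhdsWithin] with B hB
  exact (hEq B hB).symm
end

section
/- Let βv, μv > 0, let β, γ : [0, ∞) → [0, ∞) be continuous with β integrable on [0, ∞), and let p∞ : [0, ∞) → [0, ∞) be measurable with ∫_0^∞ p∞(a) da = 1. For B ≥ 0 define κ(B) := βv·B/(μv+βv·B), s_B(a) := exp(−κ(B)·∫_0^a β(h) dh), i_B(a) := κ(B)·∫_0^a exp(−∫_τ^a γ(h) dh)·β(τ)·s_B(τ) dτ, and H(B) := ∫_0^∞ p∞(a)·i_B(a) da. Then H is continuous on [0, ∞) and H(0) = 0. -/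
open MeasureTheory

/-- `H` is continuous on `[0, ∞)` and `H(0) = 0`. -/
theorem H_continuous
    (βv μv : ℝ) (hβv : 0 < βv) (hμv : 0 < μv)
    (β γ : ℝ → ℝ) (hβ_cont : ContinuousOn β (Set.Ici 0)) (hγ_cont : ContinuousOn γ (Set.Ici 0))
    (hβ_nonneg : ∀ a : ℝ, 0 ≤ a → 0 ≤ β a) (hγ_nonneg : ∀ a : ℝ, 0 ≤ a → 0 ≤ γ a)
    (hβ_int : MeasureTheory.IntegrableOn β (Set.Ioi 0))
    (pinf : ℝ → ℝ) (hp_meas : Measurable pinf) (hp_nonneg : ∀ a : ℝ, 0 ≤ a → 0 ≤ pinf a)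
    (hp_int : ∫ a in Set.Ioi (0 : ℝ), pinf a = 1)
    : ContinuousOn (Hmap βv μv β γ pinf) (Set.Ici 0) ∧ Hmap βv μv β γ pinf 0 = 0 := by
  -- Continuous extensions of β and γ to all of ℝ
  set βc : ℝ → ℝ := fun x => β (max x 0) with hβc_def
  set γc : ℝ → ℝ := fun x => γ (max x 0) with hγc_def
  have hβc_cont : Continuous βc :=
    hβ_cont.comp_continuous (continuous_id.max continuous_const) fun x => le_max_right x 0
  have hγc_cont : Continuous γc :=
    hγ_cont.comp_continuous (continuous_id.max continuous_const) fun x => le_max_right x 0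
  have hβc_eq : ∀ x : ℝ, 0 ≤ x → βc x = β x := fun x hx => by
    simp only [hβc_def, max_eq_left hx]
  have hγc_eq : ∀ x : ℝ, 0 ≤ x → γc x = γ x := fun x hx => by
    simp only [hγc_def, max_eq_left hx]
  have hβc_nonneg : ∀ x, 0 ≤ βc x := fun x => hβ_nonneg _ (le_max_right _ _)
  have hγc_nonneg : ∀ x, 0 ≤ γc x := fun x => hγ_nonneg _ (le_max_right _ _)
  -- primitives
  set Γf : ℝ → ℝ := fun x => ∫ h in (0:ℝ)..x, γc h with hΓf_def
  set Btf : ℝ → ℝ := fun x => ∫ h in (0:ℝ)..x, βc h with hBtf_def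
  have hΓf_cont : Continuous Γf :=
    intervalIntegral.continuous_primitive (fun a b => hγc_cont.intervalIntegrable a b) 0
  have hBtf_cont : Continuous Btf :=
    intervalIntegral.continuous_primitive (fun a b => hβc_cont.intervalIntegrable a b) 0
  set M : ℝ := ∫ a in Set.Ioi (0:ℝ), β a with hM_def
  have hM_nonneg : 0 ≤ M :=
    setIntegral_nonneg measurableSet_Ioi fun x hx => hβ_nonneg x (le_of_lt hx)
  -- interval integrals of β over [0,τ] equal Btf and are bounded by M
  have hβ_intcongr : ∀ τ : ℝ, 0 ≤ τ → (∫ h in (0:ℝ)..τ, β h) = Btf τ := by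
    intro τ hτ
    refine (intervalIntegral.integral_congr fun x hx => ?_).symm
    rw [Set.uIcc_of_le hτ] at hx
    exact hβc_eq x hx.1
  have hBtf_nonneg : ∀ τ : ℝ, 0 ≤ τ → 0 ≤ Btf τ := fun τ hτ =>
    intervalIntegral.integral_nonneg hτ fun u _ => hβc_nonneg u
  have hBtf_le : ∀ τ : ℝ, 0 ≤ τ → Btf τ ≤ M := by
    intro τ hτ
    rw [← hβ_intcongr τ hτ, intervalIntegral.integral_of_le hτ]
    refine setIntegral_mono_set hβ_int ?_ ?_
    · filter_upwards [ae_restrict_mem measurableSet_Ioi] with x hx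
      exact hβ_nonneg x (le_of_lt hx)
    · exact Filter.Eventually.of_forall Set.Ioc_subset_Ioi_self
  -- the parametric inner integral
  set inner : ℝ × ℝ → ℝ :=
    fun p => ∫ τ in (0:ℝ)..p.2, Real.exp (Γf τ) * βc τ * Real.exp (-(p.1 * Btf τ)) with hinner_def
  have huncurry : Continuous (Function.uncurry
      fun c τ => Real.exp (Γf τ) * βc τ * Real.exp (-(c * Btf τ))) := by
    apply Continuous.mul
    · exact ((hΓf_cont.comp continuous_snd).rexp).mul (hβc_cont.comp continuous_snd)
    · exact ((continuous_fst.mul (hBtf_cont.comp continuous_snd)).neg).rexp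
  have hinner_cont : Continuous inner :=
    intervalIntegral.continuous_parametric_primitive_of_continuous (μ := volume)
      (f := fun c τ => Real.exp (Γf τ) * βc τ * Real.exp (-(c * Btf τ))) (a₀ := 0) huncurry
  set κ : ℝ → ℝ := kappaFn βv μv with hκ_def
  -- key identity
  have key : ∀ B a : ℝ, 0 ≤ a →
      iProf βv μv β γ B a = κ B * Real.exp (-(Γf a)) * inner (κ B, a) := by
    intro B a ha
    have hcongr : (∫ τ in (0:ℝ)..a, Real.exp (-∫ h in τ..a, γ h) * β τ * sProf βv μv β B τ)
        = ∫ τ in (0:ℝ)..a,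
            Real.exp (-(Γf a)) * (Real.exp (Γf τ) * βc τ * Real.exp (-(κ B * Btf τ))) := by
      apply intervalIntegral.integral_congr
      intro τ hτ
      rw [Set.uIcc_of_le ha] at hτ
      obtain ⟨hτ0, hτa⟩ := hτ
      dsimp only
      have hβτ : β τ = βc τ := (hβc_eq τ hτ0).symm
      have hγint : (∫ h in τ..a, γ h) = Γf a - Γf τ := by
        have h1 : (∫ h in τ..a, γ h) = ∫ h in τ..a, γc h := by
          refine (intervalIntegral.integral_congr fun x hx => ?_).symm
          rw [Set.uIcc_of_le hτa] at hx
          exact hγc_eq x (le_trans hτ0 hx.1)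
        have h2 := intervalIntegral.integral_add_adjacent_intervals (μ := volume)
          (hγc_cont.intervalIntegrable 0 τ) (hγc_cont.intervalIntegrable τ a)
        rw [h1]
        have : Γf τ + (∫ h in τ..a, γc h) = Γf a := h2
        linarith
      have hsτ : sProf βv μv β B τ = Real.exp (-(κ B * Btf τ)) := by
        unfold sProf
        rw [hβ_intcongr τ hτ0, ← hκ_def]
      have hexp : Real.exp (-(Γf a - Γf τ)) = Real.exp (-(Γf a)) * Real.exp (Γf τ) := by
        rw [← Real.exp_add]; ring_nf
      rw [hγint, hβτ, hsτ, hexp]; ring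
    unfold iProf
    rw [hcongr, intervalIntegral.integral_const_mul, ← hκ_def, hinner_def]
    ring
  -- pinf is integrable
  have hp_integrable : IntegrableOn pinf (Set.Ioi (0:ℝ)) := by
    by_contra h
    rw [integral_undef h] at hp_int
    norm_num at hp_int
  constructor
  · -- continuity
    intro B₀ hB₀
    simp only [Set.mem_Ici] at hB₀
    apply ContinuousAt.continuousWithinAt
    set δ : ℝ := min 1 (μv / (2 * βv)) with hδ_def
    have hδ_pos : 0 < δ := lt_min one_pos (by positivity)
    have hδ_le1 : δ ≤ 1 := min_le_left _ _
    have hδ_le2 : δ ≤ μv / (2 * βv) := min_le_right _ _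
    set K : ℝ := 2 * βv * (B₀ + 1) / μv with hK_def
    have hK_nonneg : 0 ≤ K := by positivity
    set C : ℝ := K * (Real.exp (K * M) * M) with hC_def
    -- basic facts about B in the ball
    have hball : ∀ B ∈ Metric.ball B₀ δ, μv / 2 ≤ μv + βv * B ∧ |κ B| ≤ K := by
      intro B hB
      rw [Metric.mem_ball, Real.dist_eq, abs_lt] at hB
      have hden : μv / 2 ≤ μv + βv * B := by
        have h1 : B₀ - δ < B := by linarith [hB.1]
        have h2 : βv * δ ≤ μv / 2 := by
          have := (le_div_iff₀ (by positivity : (0:ℝ) < 2 * βv)).mp hδ_le2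
          nlinarith
        nlinarith
      refine ⟨hden, ?_⟩
      have hdpos : 0 < μv + βv * B := lt_of_lt_of_le (by positivity) hden
      have hBabs : |B| ≤ B₀ + 1 := by
        rw [abs_le]; constructor <;> nlinarith [hB.1, hB.2]
      have : |κ B| = βv * |B| / (μv + βv * B) := by
        rw [hκ_def]; unfold kappaFn
        rw [abs_div, abs_of_pos hdpos, abs_mul, abs_of_pos hβv]
      rw [this, div_le_iff₀ hdpos]
      have hKhalf : βv * (B₀ + 1) = K * (μv / 2) := by
        rw [hK_def]; field_simp
      nlinarith [mul_le_mul_of_nonneg_left hBabs (le_of_lt hβv), hK_nonneg]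
    unfold Hmap
    apply MeasureTheory.continuousAt_of_dominated (bound := fun a => pinf a * C)
    · -- measurability
      filter_upwards with B
      refine AEStronglyMeasurable.congr
        (f := fun a => pinf a * (κ B * Real.exp (-(Γf a)) * inner (κ B, a))) ?_ ?_
      · exact hp_meas.aestronglyMeasurable.mul
          ((continuous_const.mul (hΓf_cont.neg.rexp)).mul
            (hinner_cont.comp (Continuous.prodMk_right (κ B)))).aestronglyMeasurable
      · filter_upwards [ae_restrict_mem measurableSet_Ioi] with a ha
        rw [key B a (le_of_lt ha)]
    · -- bound
      filter_upwards [Metric.ball_mem_nhds B₀ hδ_pos] with B hB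
      filter_upwards [ae_restrict_mem measurableSet_Ioi] with a ha
      have ha0 : (0:ℝ) ≤ a := le_of_lt ha
      obtain ⟨hden, hκK⟩ := hball B hB
      have hpa : 0 ≤ pinf a := hp_nonneg a ha0
      rw [norm_mul, Real.norm_eq_abs, Real.norm_eq_abs, abs_of_nonneg hpa]
      refine mul_le_mul_of_nonneg_left ?_ hpa
      -- |iProf B a| ≤ C
      unfold iProf
      rw [abs_mul]
      have hinner_bound :
          |∫ τ in (0:ℝ)..a, Real.exp (-∫ h in τ..a, γ h) * β τ * sProf βv μv β B τ|
            ≤ Real.exp (K * M) * M := by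
        have hgood : ‖∫ τ in (0:ℝ)..a, Real.exp (-∫ h in τ..a, γ h) * β τ * sProf βv μv β B τ‖
            ≤ |∫ τ in (0:ℝ)..a, β τ * Real.exp (K * M)| := by
          apply intervalIntegral.norm_integral_le_abs_of_norm_le
          · filter_upwards [ae_restrict_mem measurableSet_uIoc] with τ hτ
            rw [Set.uIoc_of_le ha0] at hτ
            obtain ⟨hτ0, hτa⟩ := hτ
            have hτ0' : (0:ℝ) ≤ τ := le_of_lt hτ0
            have h1 : Real.exp (-∫ h in τ..a, γ h) ≤ 1 := by
              rw [Real.exp_le_one_iff, neg_nonpos]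
              exact intervalIntegral.integral_nonneg hτa
                fun u hu => hγ_nonneg u (le_trans hτ0' hu.1)
            have h2 : sProf βv μv β B τ ≤ Real.exp (K * M) := by
              unfold sProf
              rw [Real.exp_le_exp, hβ_intcongr τ hτ0']
              · calc -(kappaFn βv μv B * Btf τ) ≤ |kappaFn βv μv B * Btf τ| :=
                      neg_le_abs _
                  _ = |κ B| * |Btf τ| := by rw [abs_mul, hκ_def]
                  _ ≤ K * M := by
                      rw [abs_of_nonneg (hBtf_nonneg τ hτ0')]
                      exact mul_le_mul hκK (hBtf_le τ hτ0') (hBtf_nonneg τ hτ0') hK_nonneg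
            rw [Real.norm_eq_abs]
            have hβτ : 0 ≤ β τ := hβ_nonneg τ hτ0'
            have hs_pos : 0 < sProf βv μv β B τ := Real.exp_pos _
            have he_pos : 0 < Real.exp (-∫ h in τ..a, γ h) := Real.exp_pos _
            rw [abs_of_nonneg (by positivity)]
            calc Real.exp (-∫ h in τ..a, γ h) * β τ * sProf βv μv β B τ
                ≤ 1 * β τ * Real.exp (K * M) := by
                  apply mul_le_mul (mul_le_mul h1 le_rfl hβτ (by norm_num)) h2
                    (le_of_lt hs_pos)
                  positivity
              _ = β τ * Real.exp (K * M) := by ring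
          · exact ((hβ_cont.mono (by rw [Set.uIcc_of_le ha0]; intro x hx; exact hx.1)
              ).intervalIntegrable).mul_const _
        refine le_trans hgood ?_
        rw [intervalIntegral.integral_mul_const, abs_mul,
          abs_of_nonneg (by positivity : (0:ℝ) ≤ Real.exp (K * M))]
        rw [abs_of_nonneg (by
            rw [hβ_intcongr a ha0]; exact hBtf_nonneg a ha0)]
        rw [hβ_intcongr a ha0, mul_comm]
        exact mul_le_mul_of_nonneg_left (hBtf_le a ha0) (Real.exp_pos _).le
      calc |kappaFn βv μv B| *
            |∫ τ in (0:ℝ)..a, Real.exp (-∫ h in τ..a, γ h) * β τ * sProf βv μv β B τ|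
          ≤ K * (Real.exp (K * M) * M) := by
            apply mul_le_mul _ hinner_bound (abs_nonneg _) hK_nonneg
            exact hκK
        _ = C := hC_def.symm
    · -- integrability of the bound
      exact hp_integrable.mul_const C
    · -- a.e. continuity in B
      filter_upwards [ae_restrict_mem measurableSet_Ioi] with a ha
      have hEq : (fun B => pinf a * iProf βv μv β γ B a)
          = fun B => pinf a * (κ B * Real.exp (-(Γf a)) * inner (κ B, a)) :=
        funext fun B => by rw [key B a (le_of_lt ha)]
      rw [hEq]
      have hκ_cont : ContinuousAt κ B₀ := by
        rw [hκ_def]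
        unfold kappaFn
        apply ContinuousAt.div (by fun_prop) (by fun_prop)
        nlinarith
      exact continuousAt_const.mul
        ((hκ_cont.mul continuousAt_const).mul
          ((hinner_cont.continuousAt).comp (hκ_cont.prodMk continuousAt_const)))
  · -- H(0) = 0
    have : ∀ a : ℝ, iProf βv μv β γ 0 a = 0 := by
      intro a
      unfold iProf kappaFn
      simp
    unfold Hmap
    simp only [this, mul_zero, integral_zero]
end

section
/- Let βv, μv > 0 and C ≥ 0 be real numbers and set R0 := (βv/μv)·C. Let Sv* > 0, Iv* ≥ 0, B* ≥ 0 be real numbers and put Nv* := Sv* + Iv*. Assume the equilibrium relation βv·Sv*·B* = μv·Iv* and the bound B* ≤ (Iv*/Nv*)·C. If R0 < 1, then Iv* = 0 and B* = 0. -/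
/-! If some vectors were infected, the two steady-state relations would give
`Iv* ≤ R0 · (Sv*/Nv*) · Iv*`; since `Sv*/Nv* ∈ [0, 1]` and `R0 < 1`, the factor in front of `Iv*`
is `< 1`, forcing `Iv* = 0`. The equilibrium relation then gives `B* = 0`. -/

lemma mul_lt_one_of_lt_one_of_nonneg_of_le_one {α : Type*} [Ring α] [LinearOrder α]
    [IsStrictOrderedRing α] {a t : α} (ha : a < 1) (ht₀ : 0 ≤ t) (ht₁ : t ≤ 1) : a * t < 1 := by
  rcases le_or_gt 0 a with ha₀ | ha₀
  · exact mul_lt_one_of_nonneg_of_lt_one_left ha₀ ha ht₁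
  · exact (mul_nonpos_of_nonpos_of_nonneg ha₀.le ht₀).trans_lt zero_lt_one

lemma eq_zero_of_le_mul_of_lt_one {α : Type*} [Ring α] [LinearOrder α] [IsStrictOrderedRing α]
    {x r : α} (hx : 0 ≤ x) (hxr : x ≤ r * x) (hr : r < 1) : x = 0 := by
  have : (1 - r) * x ≤ 0 := by rw [sub_mul, one_mul]; exact sub_nonpos.mpr hxr
  exact le_antisymm (nonpos_of_mul_nonpos_right this (sub_pos.mpr hr)) hx

lemma steady_state_infected_le {βv μv C Sv Iv B : ℝ} (hβv : 0 ≤ βv) (hμv : 0 < μv) (hSv : 0 ≤ Sv)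
    (heq : βv * Sv * B = μv * Iv) (hbound : B ≤ Iv / (Sv + Iv) * C) :
    Iv ≤ (βv / μv * C) * (Sv / (Sv + Iv)) * Iv := by
  refine le_of_mul_le_mul_left ?_ hμv
  calc μv * Iv = βv * Sv * B := heq.symm
    _ ≤ βv * Sv * (Iv / (Sv + Iv) * C) := by gcongr
    _ = μv * ((βv / μv * C) * (Sv / (Sv + Iv)) * Iv) := by field_simp

theorem disease_free_when_R0_lt_one_general (βv μv C : ℝ)
    (hβv : 0 < βv) (hμv : 0 < μv)
    (Svstar Ivstar Bstar : ℝ)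
    (hSv : 0 < Svstar) (hIv : 0 ≤ Ivstar)
    (heq : βv * Svstar * Bstar = μv * Ivstar)
    (hbound : Bstar ≤ Ivstar / (Svstar + Ivstar) * C)
    (hR0 : (βv / μv) * C < 1) :
    Ivstar = 0 ∧ Bstar = 0 := by
  have hsus_frac : Svstar / (Svstar + Ivstar) ≤ 1 := div_le_one_of_le₀ (by linarith) (by linarith)
  have hIv0 : Ivstar = 0 :=
    eq_zero_of_le_mul_of_lt_one hIv (steady_state_infected_le hβv.le hμv hSv.le heq hbound)
      (mul_lt_one_of_lt_one_of_nonneg_of_le_one hR0 (by positivity) hsus_frac)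
  refine ⟨hIv0, ?_⟩
  have hprod : βv * Svstar * Bstar = 0 := by rw [heq, hIv0, mul_zero]
  exact (mul_eq_zero.mp hprod).resolve_left (by positivity)

/-- at a steady state with `βv·Sv*·B* = μv·Iv*` and the bound
`B* ≤ (Iv*/Nv*)·C`, if `R0 := (βv/μv)·C < 1` then `Iv* = 0` and `B* = 0`. -/
theorem disease_free_when_R0_lt_one (βv μv C : ℝ)
    (hβv : 0 < βv) (hμv : 0 < μv) (hC : 0 ≤ C)
    (Svstar Ivstar Bstar : ℝ)
    (hSv : 0 < Svstar) (hIv : 0 ≤ Ivstar) (hB : 0 ≤ Bstar)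
    (heq : βv * Svstar * Bstar = μv * Ivstar)
    (hbound : Bstar ≤ Ivstar / (Svstar + Ivstar) * C)
    (hR0 : (βv / μv) * C < 1) :
    Ivstar = 0 ∧ Bstar = 0 :=
  disease_free_when_R0_lt_one_general βv μv C hβv hμv Svstar Ivstar Bstar hSv hIv heq hbound hR0
end

section
/- Let δ, μe, μv, βv > 0 be real numbers, let β, γ : [0, ∞) → [0, ∞) be continuous with β integrable on [0, ∞), let p∞ : [0, ∞) → [0, ∞) be measurable with ∫_0^∞ p∞(a) da = 1, let g : ℝ → ℝ and f(N) := N·g(N), and suppose there exists N > 0 with g(N) = φ := (δ+μe)·μv/δ. If R0 := (βv/μv)·∫_0^∞ p∞(a)·(∫_0^a β(τ)·exp(−∫_τ^a γ(h) dh) dτ) da > 1, then there exist B* ∈ (0, 1), positive reals E*, Sv*, Iv* with Sv* + Iv* = N, and functions s*, i* : [0, ∞) → ℝ such that: f(N) = (δ+μe)·E*; δ·E* = βv·Sv*·B* + μv·Sv*; βv·Sv*·B* = μv·Iv*; s*(0) = 1, i*(0) = 0; for all a ≥ 0, s*′(a) = −β(a)·s*(a)·(Iv*/N) and i*′(a)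 = β(a)·s*(a)·(Iv*/N) − γ(a)·i*(a); and B* = ∫_0^∞ p∞(a)·i*(a) da. In particular Iv* > 0 and the steady state is endemic. -/
open MeasureTheory intervalIntegral

namespace DengueAux

noncomputable def primit (F : ℝ → ℝ) (a : ℝ) : ℝ := ∫ τ in (0:ℝ)..a, F τ

noncomputable def jint (β γ : ℝ → ℝ) (k a : ℝ) : ℝ :=
  ∫ τ in (0:ℝ)..a, k * β τ * Real.exp (-(k * primit β τ)) * Real.exp (primit γ τ)

noncomputable def ifun (β γ : ℝ → ℝ) (k a : ℝ) : ℝ :=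
  Real.exp (-(primit γ a)) * jint β γ k a

noncomputable def Ct (β γ : ℝ → ℝ) (a : ℝ) : ℝ :=
  Real.exp (-(primit γ a)) * ∫ τ in (0:ℝ)..a, β τ * Real.exp (primit γ τ)

variable {F β γ : ℝ → ℝ} {k a L : ℝ}

theorem primit_hasDerivAt (hF : Continuous F) (a : ℝ) : HasDerivAt (primit F) (F a) a :=
  intervalIntegral.integral_hasDerivAt_right (hF.intervalIntegrable _ _)
    (hF.stronglyMeasurableAtFilter _ _) hF.continuousAt

theorem primit_continuous (hF : Continuous F) : Continuous (primit F) :=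
  continuous_iff_continuousAt.2 fun a => (primit_hasDerivAt hF a).continuousAt

@[simp] theorem primit_zero : primit F 0 = 0 := intervalIntegral.integral_same

theorem primit_nonneg (h0 : ∀ τ, 0 ≤ F τ) (ha : 0 ≤ a) : 0 ≤ primit F a :=
  intervalIntegral.integral_nonneg ha fun τ _ => h0 τ

theorem primit_mono (hF : Continuous F) (h0 : ∀ τ, 0 ≤ F τ) {τ a : ℝ} (h : τ ≤ a) :
    primit F τ ≤ primit F a := by
  have := intervalIntegral.integral_add_adjacent_intervals
    (hF.intervalIntegrable (μ := volume) 0 τ) (hF.intervalIntegrable (μ := volume) τ a)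
  have h2 : 0 ≤ ∫ x in τ..a, F x := intervalIntegral.integral_nonneg h fun x _ => h0 x
  unfold primit
  linarith

theorem primit_sub (hF : Continuous F) (τ a : ℝ) :
    primit F a - primit F τ = ∫ x in τ..a, F x := by
  have := intervalIntegral.integral_add_adjacent_intervals
    (hF.intervalIntegrable (μ := volume) 0 τ) (hF.intervalIntegrable (μ := volume) τ a)
  unfold primit
  linarith

theorem key_integral (hβ : Continuous β) (k a : ℝ) :
    ∫ τ in (0:ℝ)..a, k * β τ * Real.exp (-(k * primit β τ))
      = 1 - Real.exp (-(k * primit β a)) := by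
  have hd : ∀ x ∈ Set.uIcc (0:ℝ) a,
      HasDerivAt (fun τ => -Real.exp (-(k * primit β τ)))
        (k * β x * Real.exp (-(k * primit β x))) x := by
    intro x _
    have h1 : HasDerivAt (fun τ => -(k * primit β τ)) (-(k * β x)) x :=
      (((primit_hasDerivAt hβ x).const_mul k)).neg
    have h2 := (h1.exp).neg
    rw [show k * β x * Real.exp (-(k * primit β x))
        = -(Real.exp (-(k * primit β x)) * -(k * β x)) by ring]
    exact h2
  have hcont : Continuous fun τ => k * β τ * Real.exp (-(k * primit β τ)) := by
    have : Continuous fun τ => -(k * primit β τ) :=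
      (continuous_const.mul (primit_continuous hβ)).neg
    exact (continuous_const.mul hβ).mul (Real.continuous_exp.comp this)
  have := intervalIntegral.integral_eq_sub_of_hasDerivAt hd
    (hcont.intervalIntegrable (μ := volume) 0 a)
  simp only [primit_zero, mul_zero, neg_zero, Real.exp_zero] at this
  linarith

theorem jint_integrand_continuous (hβ : Continuous β) (hγ : Continuous γ) (k : ℝ) :
    Continuous fun τ => k * β τ * Real.exp (-(k * primit β τ)) * Real.exp (primit γ τ) := by
  have h1 : Continuous fun τ => -(k * primit β τ) :=
    (continuous_const.mul (primit_continuous hβ)).neg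
  exact ((continuous_const.mul hβ).mul (Real.continuous_exp.comp h1)).mul
    (Real.continuous_exp.comp (primit_continuous hγ))

theorem jint_hasDerivAt (hβ : Continuous β) (hγ : Continuous γ) (k a : ℝ) :
    HasDerivAt (jint β γ k)
      (k * β a * Real.exp (-(k * primit β a)) * Real.exp (primit γ a)) a :=
  intervalIntegral.integral_hasDerivAt_right
    ((jint_integrand_continuous hβ hγ k).intervalIntegrable _ _)
    ((jint_integrand_continuous hβ hγ k).stronglyMeasurableAtFilter _ _)
    (jint_integrand_continuous hβ hγ k).continuousAt

theorem ifun_nonneg (hβ0 : ∀ τ, 0 ≤ β τ) (hk : 0 ≤ k) (ha : 0 ≤ a) :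
    0 ≤ ifun β γ k a := by
  have : 0 ≤ jint β γ k a :=
    intervalIntegral.integral_nonneg ha fun τ _ => by
    have := hβ0 τ
    positivity
  exact mul_nonneg (Real.exp_nonneg _) this

theorem ifun_le (hβ : Continuous β) (hγ : Continuous γ) (hβ0 : ∀ τ, 0 ≤ β τ)
    (hγ0 : ∀ τ, 0 ≤ γ τ) (hk : 0 ≤ k) (ha : 0 ≤ a) :
    ifun β γ k a ≤ 1 - Real.exp (-(k * primit β a)) := by
  have hj : jint β γ k a ≤ (1 - Real.exp (-(k * primit β a))) * Real.exp (primit γ a) := by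
    have hmono : ∀ τ ∈ Set.Icc 0 a,
        k * β τ * Real.exp (-(k * primit β τ)) * Real.exp (primit γ τ)
          ≤ k * β τ * Real.exp (-(k * primit β τ)) * Real.exp (primit γ a) := by
      intro τ hτ
      have : Real.exp (primit γ τ) ≤ Real.exp (primit γ a) :=
        Real.exp_le_exp.2 (primit_mono hγ hγ0 hτ.2)
      have h0 : 0 ≤ k * β τ * Real.exp (-(k * primit β τ)) :=
        mul_nonneg (mul_nonneg hk (hβ0 τ)) (Real.exp_nonneg _)
      exact mul_le_mul_of_nonneg_left this h0
    have hc2 : Continuous fun τ =>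
        k * β τ * Real.exp (-(k * primit β τ)) * Real.exp (primit γ a) := by
      have hn : Continuous fun τ => -(k * primit β τ) :=
        (continuous_const.mul (primit_continuous hβ)).neg
      exact ((continuous_const.mul hβ).mul (Real.continuous_exp.comp hn)).mul continuous_const
    have h1 : jint β γ k a
        ≤ ∫ τ in (0:ℝ)..a, k * β τ * Real.exp (-(k * primit β τ)) * Real.exp (primit γ a) :=
      intervalIntegral.integral_mono_on ha
        ((jint_integrand_continuous hβ hγ k).intervalIntegrable _ _)
        (hc2.intervalIntegrable _ _)
        hmono
    calc jint β γ k a ≤ _ := h1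
      _ = (∫ τ in (0:ℝ)..a, k * β τ * Real.exp (-(k * primit β τ))) * Real.exp (primit γ a) :=
        intervalIntegral.integral_mul_const _ _
      _ = (1 - Real.exp (-(k * primit β a))) * Real.exp (primit γ a) := by
        rw [key_integral hβ]
  have he : Real.exp (-(primit γ a)) * Real.exp (primit γ a) = 1 := by
    rw [← Real.exp_add]; simp
  calc ifun β γ k a ≤ Real.exp (-(primit γ a)) *
        ((1 - Real.exp (-(k * primit β a))) * Real.exp (primit γ a)) :=
        mul_le_mul_of_nonneg_left hj (Real.exp_nonneg _)
    _ = (1 - Real.exp (-(k * primit β a))) *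
        (Real.exp (-(primit γ a)) * Real.exp (primit γ a)) := by ring
    _ = 1 - Real.exp (-(k * primit β a)) := by rw [he, mul_one]

theorem ifun_ge (hβ : Continuous β) (hγ : Continuous γ) (hβ0 : ∀ τ, 0 ≤ β τ)
    (hk : 0 ≤ k) (ha : 0 ≤ a) (hbd : ∀ τ ∈ Set.Icc (0:ℝ) a, primit β τ ≤ L) :
    k * Real.exp (-(k * L)) * Ct β γ a ≤ ifun β γ k a := by
  have hmono : ∀ τ ∈ Set.Icc (0:ℝ) a,
      k * Real.exp (-(k * L)) * (β τ * Real.exp (primit γ τ))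
        ≤ k * β τ * Real.exp (-(k * primit β τ)) * Real.exp (primit γ τ) := by
    intro τ hτ
    have : Real.exp (-(k * L)) ≤ Real.exp (-(k * primit β τ)) := by
      apply Real.exp_le_exp.2
      have := hbd τ hτ
      nlinarith
    nlinarith [hβ0 τ, Real.exp_nonneg (primit γ τ), Real.exp_nonneg (-(k * primit β τ)),
      mul_le_mul_of_nonneg_left this (mul_nonneg (mul_nonneg hk (hβ0 τ)) (Real.exp_nonneg (primit γ τ)))]
  have h1 : (∫ τ in (0:ℝ)..a, k * Real.exp (-(k * L)) * (β τ * Real.exp (primit γ τ)))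
      ≤ jint β γ k a :=
    intervalIntegral.integral_mono_on ha
      ((continuous_const.mul (hβ.mul (Real.continuous_exp.comp
        (primit_continuous hγ)))).intervalIntegrable _ _)
      ((jint_integrand_continuous hβ hγ k).intervalIntegrable _ _)
      hmono
  have h2 : (∫ τ in (0:ℝ)..a, k * Real.exp (-(k * L)) * (β τ * Real.exp (primit γ τ)))
      = k * Real.exp (-(k * L)) * ∫ τ in (0:ℝ)..a, β τ * Real.exp (primit γ τ) :=
    intervalIntegral.integral_const_mul _ _
  unfold ifun Ct
  calc k * Real.exp (-(k * L)) *
        (Real.exp (-(primit γ a)) * ∫ τ in (0:ℝ)..a, β τ * Real.exp (primit γ τ))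
      = Real.exp (-(primit γ a)) *
        (k * Real.exp (-(k * L)) * ∫ τ in (0:ℝ)..a, β τ * Real.exp (primit γ τ)) := by ring
    _ ≤ Real.exp (-(primit γ a)) * jint β γ k a := by
        apply mul_le_mul_of_nonneg_left _ (Real.exp_nonneg _)
        rw [← h2]; exact h1

theorem Ct_nonneg (hβ0 : ∀ τ, 0 ≤ β τ) (ha : 0 ≤ a) : 0 ≤ Ct β γ a := by
  have : 0 ≤ ∫ τ in (0:ℝ)..a, β τ * Real.exp (primit γ τ) :=
    intervalIntegral.integral_nonneg ha fun τ _ => by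
    have := hβ0 τ
    positivity
  exact mul_nonneg (Real.exp_nonneg _) this

theorem Ct_le (hβ : Continuous β) (hγ : Continuous γ) (hβ0 : ∀ τ, 0 ≤ β τ)
    (hγ0 : ∀ τ, 0 ≤ γ τ) (ha : 0 ≤ a) : Ct β γ a ≤ primit β a := by
  have h1 : (∫ τ in (0:ℝ)..a, β τ * Real.exp (primit γ τ))
      ≤ ∫ τ in (0:ℝ)..a, β τ * Real.exp (primit γ a) :=
    intervalIntegral.integral_mono_on ha
      ((hβ.mul (Real.continuous_exp.comp (primit_continuous hγ))).intervalIntegrable _ _)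
      ((hβ.mul continuous_const).intervalIntegrable _ _)
      (fun τ hτ => mul_le_mul_of_nonneg_left
        (Real.exp_le_exp.2 (primit_mono hγ hγ0 hτ.2)) (hβ0 τ))
  have h2 : (∫ τ in (0:ℝ)..a, β τ * Real.exp (primit γ a))
      = primit β a * Real.exp (primit γ a) := intervalIntegral.integral_mul_const _ _
  have he : Real.exp (-(primit γ a)) * Real.exp (primit γ a) = 1 := by
    rw [← Real.exp_add]; simp
  have hB : 0 ≤ primit β a := primit_nonneg hβ0 ha
  calc Ct β γ a ≤ Real.exp (-(primit γ a)) * (primit β a * Real.exp (primit γ a)) := by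
        unfold Ct
        exact mul_le_mul_of_nonneg_left (h2 ▸ h1) (Real.exp_nonneg _)
    _ = primit β a * (Real.exp (-(primit γ a)) * Real.exp (primit γ a)) := by ring
    _ = primit β a := by rw [he, mul_one]

theorem Ct_continuous (hβ : Continuous β) (hγ : Continuous γ) :
    Continuous (Ct β γ) := by
  unfold Ct
  apply (Real.continuous_exp.comp (primit_continuous hγ).neg).mul
  exact continuous_iff_continuousAt.2 fun a =>
    (intervalIntegral.integral_hasDerivAt_right
      ((hβ.mul (Real.continuous_exp.comp (primit_continuous hγ))).intervalIntegrable _ _)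
      ((hβ.mul (Real.continuous_exp.comp (primit_continuous hγ))).stronglyMeasurableAtFilter _ _)
      (hβ.mul (Real.continuous_exp.comp (primit_continuous hγ))).continuousAt).continuousAt

theorem ifun_continuous_in_a (hβ : Continuous β) (hγ : Continuous γ) (k : ℝ) :
    Continuous fun a => ifun β γ k a := by
  unfold ifun
  exact (Real.continuous_exp.comp (primit_continuous hγ).neg).mul
    (continuous_iff_continuousAt.2 fun a => (jint_hasDerivAt hβ hγ k a).continuousAt)

theorem ifun_continuous_in_k (hβ : Continuous β) (hγ : Continuous γ) (a : ℝ) :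
    Continuous fun k => ifun β γ k a := by
  unfold ifun jint
  apply continuous_const.mul
  apply intervalIntegral.continuous_parametric_intervalIntegral_of_continuous'
  show Continuous (Function.uncurry fun k τ =>
    k * β τ * Real.exp (-(k * primit β τ)) * Real.exp (primit γ τ))
  apply Continuous.mul
  · apply Continuous.mul
    · exact continuous_fst.mul (hβ.comp continuous_snd)
    · exact Real.continuous_exp.comp
        ((continuous_fst.mul ((primit_continuous hβ).comp continuous_snd)).neg)
  · exact Real.continuous_exp.comp ((primit_continuous hγ).comp continuous_snd)

end DengueAux


open MeasureTheory

set_option maxHeartbeats 2000000 in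
/-- if there is a positive vector equilibrium (`g(N) = φ` for some `N > 0`)
and `R0 > 1`, then the age-structured dengue model has an endemic non-uniform steady
state: there exist `B* ∈ (0,1)`, positive `E*, Sv*, Iv*` with `Sv* + Iv* = N`, and age
profiles `s*, i*` solving the steady-state equations with force of infection `B*`. -/
theorem endemic_steady_state_exists
    (δ μe μv βv : ℝ) (hδ : 0 < δ) (hμe : 0 < μe) (hμv : 0 < μv) (hβv : 0 < βv)
    (β γ : ℝ → ℝ) (hβ_cont : ContinuousOn β (Set.Ici 0)) (hγ_cont : ContinuousOn γ (Set.Ici 0))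
    (hβ_nonneg : ∀ a : ℝ, 0 ≤ a → 0 ≤ β a) (hγ_nonneg : ∀ a : ℝ, 0 ≤ a → 0 ≤ γ a)
    (hβ_int : MeasureTheory.IntegrableOn β (Set.Ioi 0))
    (pinf : ℝ → ℝ) (hp_meas : Measurable pinf) (hp_nonneg : ∀ a : ℝ, 0 ≤ a → 0 ≤ pinf a)
    (hp_int : ∫ a in Set.Ioi (0 : ℝ), pinf a = 1)
    (g : ℝ → ℝ) (f : ℝ → ℝ) (hf : ∀ x, f x = x * g x)
    (N : ℝ) (hN : 0 < N) (hgN : g N = (δ + μe) * μv / δ)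
    (hR0 : 1 < R0 βv μv β γ pinf) :
    ∃ Bstar Estar Svstar Ivstar : ℝ, ∃ sstar istar : ℝ → ℝ,
      Bstar ∈ Set.Ioo (0 : ℝ) 1 ∧
      0 < Estar ∧ 0 < Svstar ∧ 0 < Ivstar ∧ Svstar + Ivstar = N ∧
      f N = (δ + μe) * Estar ∧
      δ * Estar = βv * Svstar * Bstar + μv * Svstar ∧
      βv * Svstar * Bstar = μv * Ivstar ∧
      sstar 0 = 1 ∧ istar 0 = 0 ∧
      (∀ a ∈ Set.Ici (0 : ℝ),
        HasDerivWithinAt sstar (-(β a * sstar a * (Ivstar / N))) (Set.Ici 0) a) ∧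
      (∀ a ∈ Set.Ici (0 : ℝ),
        HasDerivWithinAt istar (β a * sstar a * (Ivstar / N) - γ a * istar a)
          (Set.Ici 0) a) ∧
      Bstar = ∫ a in Set.Ioi (0 : ℝ), pinf a * istar a := by
  classical
  -- extended versions of β and γ, continuous on all of ℝ
  set βt : ℝ → ℝ := fun τ => β (max τ 0) with hβt_def
  set γt : ℝ → ℝ := fun τ => γ (max τ 0) with hγt_def
  have hβtc : Continuous βt :=
    hβ_cont.comp_continuous (continuous_id.max continuous_const) fun x => Set.mem_Ici.2 (le_max_right _ _)
  have hγtc : Continuous γt :=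
    hγ_cont.comp_continuous (continuous_id.max continuous_const) fun x => Set.mem_Ici.2 (le_max_right _ _)
  have hβt0 : ∀ τ, 0 ≤ βt τ := fun τ => hβ_nonneg _ (le_max_right _ _)
  have hγt0 : ∀ τ, 0 ≤ γt τ := fun τ => hγ_nonneg _ (le_max_right _ _)
  have hβt_eq : ∀ a : ℝ, 0 ≤ a → βt a = β a := fun a ha => by
    simp only [hβt_def, max_eq_left ha]
  have hγt_eq : ∀ a : ℝ, 0 ≤ a → γt a = γ a := fun a ha => by
    simp only [hγt_def, max_eq_left ha]
  set L : ℝ := ∫ a in Set.Ioi (0:ℝ), β a with hL_def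
  have hL0 : 0 ≤ L := setIntegral_nonneg measurableSet_Ioi fun a ha => hβ_nonneg a (le_of_lt ha)
  have hBb_le : ∀ a : ℝ, 0 ≤ a → DengueAux.primit βt a ≤ L := by
    intro a ha
    have h1 : DengueAux.primit βt a = ∫ τ in Set.Ioc (0:ℝ) a, β τ := by
      show (∫ τ in (0:ℝ)..a, βt τ) = _
      rw [intervalIntegral.integral_of_le ha]
      exact setIntegral_congr_fun measurableSet_Ioc fun τ hτ => hβt_eq τ hτ.1.le
    rw [h1, hL_def]
    apply setIntegral_mono_set hβ_int
    · filter_upwards [ae_restrict_mem measurableSet_Ioi] with x hx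
      exact hβ_nonneg x hx.le
    · exact Set.Ioc_subset_Ioi_self.eventuallyLE
  -- pinf is integrable
  have hpinf_int : IntegrableOn pinf (Set.Ioi (0:ℝ)) := by
    by_contra hc
    rw [integral_undef hc] at hp_int
    norm_num at hp_int
  -- rewrite R0 via Ct
  have hCt_eq : ∀ a ∈ Set.Ioi (0:ℝ),
      (∫ τ in (0:ℝ)..a, β τ * Real.exp (-∫ h in τ..a, γ h)) = DengueAux.Ct βt γt a := by
    intro a ha
    have ha' : (0:ℝ) ≤ a := le_of_lt ha
    have h1 : ∀ τ ∈ Set.uIcc (0:ℝ) a,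
        β τ * Real.exp (-∫ h in τ..a, γ h)
          = βt τ * Real.exp (DengueAux.primit γt τ) * Real.exp (-(DengueAux.primit γt a)) := by
      intro τ hτ
      rw [Set.uIcc_of_le ha'] at hτ
      have hγeq : (∫ h in τ..a, γ h) = ∫ h in τ..a, γt h := by
        apply intervalIntegral.integral_congr
        intro x hx
        rw [Set.uIcc_of_le hτ.2] at hx
        exact (hγt_eq x (le_trans hτ.1 hx.1)).symm
      rw [hβt_eq τ hτ.1, hγeq, ← DengueAux.primit_sub hγtc τ a,
        show -(DengueAux.primit γt a - DengueAux.primit γt τ)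
          = DengueAux.primit γt τ + -(DengueAux.primit γt a) by ring, Real.exp_add]
      ring
    rw [intervalIntegral.integral_congr h1, intervalIntegral.integral_mul_const]
    show (∫ τ in (0:ℝ)..a, βt τ * Real.exp (DengueAux.primit γt τ)) *
      Real.exp (-(DengueAux.primit γt a)) = DengueAux.Ct βt γt a
    unfold DengueAux.Ct
    ring
  set CI : ℝ := ∫ a in Set.Ioi (0:ℝ), pinf a * DengueAux.Ct βt γt a with hCI_def
  have hR : 1 < (βv/μv) * CI := by
    have : R0 βv μv β γ pinf = (βv/μv) * CI := by
      unfold R0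
      rw [hCI_def]
      congr 1
      exact setIntegral_congr_fun measurableSet_Ioi fun a ha => by rw [hCt_eq a ha]
    rwa [this] at hR0
  -- clamp
  set c : ℝ → ℝ := fun x => min (max x 0) 1 with hc_def
  have hc_cont : Continuous c := (continuous_id.max continuous_const).min continuous_const
  have hc_mem : ∀ x, c x ∈ Set.Icc (0:ℝ) 1 :=
    fun x => ⟨le_min (le_max_right _ _) zero_le_one, min_le_right _ _⟩
  have hc_eq : ∀ k ∈ Set.Icc (0:ℝ) 1, c k = k := fun k hk => by
    simp only [hc_def]; rw [max_eq_left hk.1, min_eq_left hk.2]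
  set Ψ : ℝ → ℝ := fun x => ∫ a in Set.Ioi (0:ℝ), pinf a * DengueAux.ifun βt γt (c x) a
    with hΨ_def
  have hifun_bdd : ∀ k ∈ Set.Icc (0:ℝ) 1, ∀ a : ℝ, 0 ≤ a →
      0 ≤ DengueAux.ifun βt γt k a ∧ DengueAux.ifun βt γt k a ≤ 1 := by
    intro k hk a ha
    refine ⟨DengueAux.ifun_nonneg hβt0 hk.1 ha, ?_⟩
    have h1 := DengueAux.ifun_le hβtc hγtc hβt0 hγt0 hk.1 ha
    linarith [Real.exp_pos (-(k * DengueAux.primit βt a))]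
  have hΨmeas : ∀ k : ℝ, AEStronglyMeasurable (fun a => pinf a * DengueAux.ifun βt γt k a)
      (volume.restrict (Set.Ioi 0)) := fun k =>
    (hp_meas.aestronglyMeasurable.mul
      (DengueAux.ifun_continuous_in_a hβtc hγtc k).aestronglyMeasurable).restrict
  have hΨcont : Continuous Ψ := by
    rw [hΨ_def]
    apply continuous_of_dominated (bound := pinf) (fun x => hΨmeas (c x))
    · intro x
      filter_upwards [ae_restrict_mem measurableSet_Ioi] with a ha
      have h1 := hifun_bdd (c x) (hc_mem x) a ha.le
      have h2 := hp_nonneg a ha.le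
      rw [Real.norm_eq_abs, abs_mul, abs_of_nonneg h2, abs_of_nonneg h1.1]
      nlinarith [h1.2]
    · exact hpinf_int
    · filter_upwards with a
      exact continuous_const.mul ((DengueAux.ifun_continuous_in_k hβtc hγtc a).comp hc_cont)
  have hint1 : ∀ k ∈ Set.Icc (0:ℝ) 1,
      IntegrableOn (fun a => pinf a * DengueAux.ifun βt γt k a) (Set.Ioi 0) := by
    intro k hk
    apply Integrable.mono' hpinf_int (hΨmeas k)
    filter_upwards [ae_restrict_mem measurableSet_Ioi] with a ha
    have h1 := hifun_bdd k hk a ha.le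
    have h2 := hp_nonneg a ha.le
    rw [Real.norm_eq_abs, abs_mul, abs_of_nonneg h2, abs_of_nonneg h1.1]
    nlinarith [h1.2]
  have hCt_bdd : ∀ a : ℝ, 0 < a →
      0 ≤ DengueAux.Ct βt γt a ∧ DengueAux.Ct βt γt a ≤ L := fun a ha =>
    ⟨DengueAux.Ct_nonneg hβt0 ha.le,
     le_trans (DengueAux.Ct_le hβtc hγtc hβt0 hγt0 ha.le) (hBb_le a ha.le)⟩
  have hint2 : IntegrableOn (fun a => pinf a * DengueAux.Ct βt γt a) (Set.Ioi 0) := by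
    apply Integrable.mono' (hpinf_int.const_mul L)
      ((hp_meas.aestronglyMeasurable.mul
        (DengueAux.Ct_continuous hβtc hγtc).aestronglyMeasurable).restrict)
    filter_upwards [ae_restrict_mem measurableSet_Ioi] with a ha
    show ‖pinf a * DengueAux.Ct βt γt a‖ ≤ L * pinf a
    have h1 := hCt_bdd a ha
    have h2 := hp_nonneg a ha.le
    rw [Real.norm_eq_abs, abs_mul, abs_of_nonneg h2, abs_of_nonneg h1.1]
    nlinarith [h1.2]
  -- lower bound for Ψ
  have hΨ_ge : ∀ k ∈ Set.Icc (0:ℝ) 1, k * Real.exp (-(k*L)) * CI ≤ Ψ k := by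
    intro k hk
    have heq : Ψ k = ∫ a in Set.Ioi (0:ℝ), pinf a * DengueAux.ifun βt γt k a := by
      simp only [hΨ_def]; rw [hc_eq k hk]
    rw [heq]
    have hmono : ∀ a ∈ Set.Ioi (0:ℝ),
        (k * Real.exp (-(k*L))) * (pinf a * DengueAux.Ct βt γt a)
          ≤ pinf a * DengueAux.ifun βt γt k a := by
      intro a ha
      calc (k * Real.exp (-(k*L))) * (pinf a * DengueAux.Ct βt γt a)
          = pinf a * (k * Real.exp (-(k*L)) * DengueAux.Ct βt γt a) := by ring
        _ ≤ pinf a * DengueAux.ifun βt γt k a := by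
            apply mul_le_mul_of_nonneg_left _ (hp_nonneg a ha.le)
            exact DengueAux.ifun_ge hβtc hγtc hβt0 hk.1 ha.le fun τ hτ => hBb_le τ hτ.1
    have hle := setIntegral_mono_on (hint2.const_mul _) (hint1 k hk) measurableSet_Ioi hmono
    rw [MeasureTheory.integral_const_mul] at hle
    rw [hCI_def]
    linarith [hle]
  -- upper bound for Ψ
  have hΨ_le : ∀ k ∈ Set.Icc (0:ℝ) 1, Ψ k ≤ 1 - Real.exp (-(k * L)) := by
    intro k hk
    have heq : Ψ k = ∫ a in Set.Ioi (0:ℝ), pinf a * DengueAux.ifun βt γt k a := by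
      simp only [hΨ_def]; rw [hc_eq k hk]
    rw [heq]
    have hmono : ∀ a ∈ Set.Ioi (0:ℝ),
        pinf a * DengueAux.ifun βt γt k a ≤ pinf a * (1 - Real.exp (-(k * L))) := by
      intro a ha
      apply mul_le_mul_of_nonneg_left _ (hp_nonneg a ha.le)
      have h1 := DengueAux.ifun_le hβtc hγtc hβt0 hγt0 hk.1 ha.le
      have h2 : Real.exp (-(k*L)) ≤ Real.exp (-(k * DengueAux.primit βt a)) := by
        apply Real.exp_le_exp.2
        have := hBb_le a ha.le
        nlinarith [hk.1]
      linarith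
    have hle := setIntegral_mono_on (hint1 k hk) (hpinf_int.mul_const _) measurableSet_Ioi hmono
    rw [MeasureTheory.integral_mul_const, hp_int, one_mul] at hle
    exact hle
  -- the fixed-point function
  set R : ℝ := (βv/μv) * CI with hR_def
  have hR1 : 1 < R := hR
  have hCIval : CI = R * μv / βv := by rw [hR_def]; field_simp
  have hRL : 0 ≤ R * L := mul_nonneg (by nlinarith) hL0
  have hden : 0 < 2 * βv * (1 + R * L) := by nlinarith
  set B0 : ℝ := min (((R - 1) * μv) / (2 * βv * (1 + R * L))) (1/2) with hB0_def
  have hB0pos : 0 < B0 := lt_min (div_pos (by nlinarith) hden) (by norm_num)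
  have hB0lt1 : B0 < 1 := lt_of_le_of_lt (min_le_right _ _) (by norm_num)
  set kB : ℝ → ℝ := fun B => βv * B / (βv * B + μv) with hkB_def
  have hkB_mem : ∀ B : ℝ, 0 ≤ B → kB B ∈ Set.Icc (0:ℝ) 1 := by
    intro B hB
    have hD : 0 < βv * B + μv := by nlinarith
    constructor
    · exact div_nonneg (by nlinarith) hD.le
    · rw [div_le_one hD]; nlinarith
  set hfun : ℝ → ℝ := fun B => Ψ (kB B) - B with hh_def
  have hhcont : ContinuousOn hfun (Set.Icc B0 1) := by
    apply ContinuousOn.sub _ continuousOn_id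
    apply hΨcont.comp_continuousOn
    apply ContinuousOn.div (continuous_const.mul continuous_id).continuousOn
      ((continuous_const.mul continuous_id).add continuous_const).continuousOn
    intro B hB
    have : 0 < βv * B + μv := by nlinarith [hB.1, hB0pos]
    exact ne_of_gt this
  -- hfun B0 > 0
  have hhB0 : 0 < hfun B0 := by
    have hk0mem := hkB_mem B0 hB0pos.le
    have hD : 0 < βv * B0 + μv := by nlinarith
    have hk0D : kB B0 * (βv * B0 + μv) = βv * B0 := by
      simp only [hkB_def]; field_simp
    have h1 : kB B0 * Real.exp (-(kB B0 * L)) * CI ≤ Ψ (kB B0) := hΨ_ge _ hk0mem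
    set E := Real.exp (-(kB B0 * L)) with hE_def
    have hEpos : 0 < E := Real.exp_pos _
    have hexp : 1 - kB B0 * L ≤ E := by
      have := Real.add_one_le_exp (-(kB B0 * L)); linarith
    have hk0pos : 0 < kB B0 := div_pos (by nlinarith) hD
    have hμk : μv * kB B0 ≤ βv * B0 := by
      have h5 : μv * kB B0 ≤ (βv * B0 + μv) * kB B0 :=
        mul_le_mul_of_nonneg_right (by nlinarith) hk0mem.1
      nlinarith [hk0D]
    have hμE : μv - βv * B0 * L ≤ μv * E := by
      have h2 : μv * (1 - kB B0 * L) ≤ μv * E := by nlinarith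
      have h3 : μv * kB B0 * L ≤ βv * B0 * L := by nlinarith
      nlinarith
    have hB0small : βv * B0 * (1 + R * L) ≤ (R - 1) * μv / 2 := by
      have hm : B0 ≤ ((R - 1) * μv) / (2 * βv * (1 + R * L)) := min_le_left _ _
      have h4 : 0 < 1 + R * L := by nlinarith
      calc βv * B0 * (1 + R * L)
          ≤ βv * (((R - 1) * μv) / (2 * βv * (1 + R * L))) * (1 + R * L) := by nlinarith
        _ = (R - 1) * μv / 2 := by field_simp
    have hRE : βv * B0 + μv < R * μv * E := by
      nlinarith [mul_le_mul_of_nonneg_left hμE (show (0:ℝ) ≤ R by nlinarith)]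
    have key : B0 < kB B0 * E * CI := by
      rw [hCIval]
      rw [show kB B0 * E * (R * μv / βv) = kB B0 * E * (R * μv) / βv by ring,
        lt_div_iff₀ hβv]
      nlinarith [mul_pos (mul_pos hβv hB0pos) (sub_pos.2 hRE)]
    show 0 < Ψ (kB B0) - B0
    linarith
  -- hfun 1 < 0
  have hh1 : hfun 1 < 0 := by
    have hk1mem := hkB_mem 1 zero_le_one
    have h1 := hΨ_le (kB 1) hk1mem
    have h2 := Real.exp_pos (-(kB 1 * L))
    show Ψ (kB 1) - 1 < 0
    linarith
  -- intermediate value theorem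
  obtain ⟨Bstar, hBmem, hBeq⟩ :=
    intermediate_value_Icc' hB0lt1.le hhcont ⟨hh1.le, hhB0.le⟩
  have hBpos : 0 < Bstar := lt_of_lt_of_le hB0pos hBmem.1
  have hBlt1 : Bstar < 1 := by
    rcases lt_or_eq_of_le hBmem.2 with h | h
    · exact h
    · exfalso; rw [h] at hBeq; rw [hBeq] at hh1; exact lt_irrefl 0 hh1
  have hD : 0 < βv * Bstar + μv := by nlinarith
  set kstar : ℝ := βv * Bstar / (βv * Bstar + μv) with hks_def
  have hksD : kstar * (βv * Bstar + μv) = βv * Bstar := by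
    rw [hks_def]; field_simp
  have hkspos : 0 < kstar := div_pos (by nlinarith) hD
  have hkslt1 : kstar < 1 := by rw [hks_def, div_lt_one hD]; nlinarith
  have hksmem : kstar ∈ Set.Icc (0:ℝ) 1 := ⟨hkspos.le, hkslt1.le⟩
  have hPsi : Ψ kstar = Bstar := by
    have h1 : Ψ (kB Bstar) - Bstar = 0 := hBeq
    have h2 : kB Bstar = kstar := rfl
    rw [h2] at h1; linarith
  have hIvN : N * kstar / N = kstar := by field_simp
  -- assemble
  refine ⟨Bstar, N * μv / δ, N * (μv / (βv * Bstar + μv)), N * kstar,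
    fun a => Real.exp (-(kstar * DengueAux.primit βt a)),
    fun a => DengueAux.ifun βt γt kstar a,
    ⟨hBpos, hBlt1⟩, by positivity, mul_pos hN (div_pos hμv hD), mul_pos hN hkspos,
    ?_, ?_, ?_, ?_, ?_, ?_, ?_, ?_, ?_⟩
  · -- Sv + Iv = N
    rw [hks_def]; field_simp; ring
  · -- f N = (δ+μe) E
    rw [hf, hgN]; field_simp
  · -- δ E = βv Sv B + μv Sv
    field_simp
  · -- βv Sv B = μv Iv
    rw [hks_def]; field_simp
  · -- sstar 0 = 1
    simp [DengueAux.primit_zero]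
  · -- istar 0 = 0
    simp [DengueAux.ifun, DengueAux.jint]
  · -- s derivative
    intro a ha
    have hd : HasDerivAt (fun x => Real.exp (-(kstar * DengueAux.primit βt x)))
        (Real.exp (-(kstar * DengueAux.primit βt a)) * -(kstar * βt a)) a :=
      (((DengueAux.primit_hasDerivAt hβtc a).const_mul kstar).neg).exp
    exact hd.hasDerivWithinAt.congr_deriv (by beta_reduce; rw [hIvN, hβt_eq a ha]; ring)
  · -- i derivative
    intro a ha
    have hE : HasDerivAt (fun x => Real.exp (-(DengueAux.primit γt x)))
        (Real.exp (-(DengueAux.primit γt a)) * -(γt a)) a :=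
      ((DengueAux.primit_hasDerivAt hγtc a).neg).exp
    have hJ := DengueAux.jint_hasDerivAt hβtc hγtc kstar a
    have hprod := hE.mul hJ
    have h2 : HasDerivWithinAt (fun x => DengueAux.ifun βt γt kstar x)
        (Real.exp (-(DengueAux.primit γt a)) * -(γt a) * DengueAux.jint βt γt kstar a
          + Real.exp (-(DengueAux.primit γt a)) *
            (kstar * βt a * Real.exp (-(kstar * DengueAux.primit βt a)) *
              Real.exp (DengueAux.primit γt a)))
        (Set.Ici 0) a := hprod.hasDerivWithinAt
    convert h2 using 1
    have hXY : Real.exp (-(DengueAux.primit γt a)) * Real.exp (DengueAux.primit γt a) = 1 := by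
      rw [← Real.exp_add]; simp
    rw [hIvN, hβt_eq a ha, hγt_eq a ha]
    show β a * Real.exp (-(kstar * DengueAux.primit βt a)) * kstar
        - γ a * DengueAux.ifun βt γt kstar a = _
    unfold DengueAux.ifun
    linear_combination (-(kstar * β a * Real.exp (-(kstar * DengueAux.primit βt a)))) * hXY
  · -- fixed point equation
    have h1 : Ψ kstar = ∫ a in Set.Ioi (0:ℝ), pinf a * DengueAux.ifun βt γt kstar a := by
      simp only [hΨ_def]; rw [hc_eq kstar hksmem]
    rw [← hPsi, h1]
end
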